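/- arXiv:1004.4248 — 9 statements merged into one kernel-verified Lean document; each statement's English description precedes it below -/
import Mathlib

section
/- For distinct complex numbers z_1,...,z_n, the KZ elements H_a = Σ_{b≠a} σ_{a,b}/(z_a - z_b) in the group algebra C[S_n] (where σ_{a,b} is the transposition of a and b) pairwise commute: H_a H_b = H_b H_a for all a,b. -/
open Equiv Finset

lemma swap_comm_of_ne {α}[DecidableEq α]{a x b y : α} (h1 : a≠b)(h2:a≠y)(h3:x≠b)(h4:x≠y) :
    swap a x * swap b y = swap b y * swap a x := by
  ext t
  simp only [Equiv.Perm.mul_apply, Equiv.swap_apply_def]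
  split_ifs <;> simp_all

lemma sw1 {α}[DecidableEq α]{a b e : α}(hab : a≠b)(hae : a≠e)(hbe : b≠e) :
    swap a e * swap a b = swap a b * swap b e := by
  ext x
  simp only [Equiv.Perm.mul_apply, Equiv.swap_apply_def]
  split_ifs <;> simp_all

lemma sw2 {α}[DecidableEq α]{a b e : α}(hab : a≠b)(hae : a≠e)(hbe : b≠e) :
    swap a b * swap a e = swap b e * swap a b := by
  ext x
  simp only [Equiv.Perm.mul_apply, Equiv.swap_apply_def]
  split_ifs <;> simp_all

lemma sw3 {α}[DecidableEq α]{a b e : α}(hab : a≠b)(hae : a≠e)(hbe : b≠e) :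
    swap a e * swap b e = swap b e * swap a b := by
  ext x
  simp only [Equiv.Perm.mul_apply, Equiv.swap_apply_def]
  split_ifs <;> simp_all

lemma sw4 {α}[DecidableEq α]{a b e : α}(hab : a≠b)(hae : a≠e)(hbe : b≠e) :
    swap b e * swap a e = swap a b * swap b e := by
  ext x
  simp only [Equiv.Perm.mul_apply, Equiv.swap_apply_def]
  split_ifs <;> simp_all

/-- For distinct complex numbers `z 1, ..., z n`, the KZ elements
`H a = ∑_{b ≠ a} (z a - z b)⁻¹ σ_{a,b}` in the group algebra `ℂ[S_n]` pairwise commute. -/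
theorem stmt_0 (n : ℕ) (z : Fin n → ℂ) (hz : Function.Injective z)
    (H : Fin n → MonoidAlgebra ℂ (Equiv.Perm (Fin n)))
    (hH : ∀ a, H a = ∑ b ∈ Finset.univ.filter (fun b => b ≠ a),
      (z a - z b)⁻¹ • MonoidAlgebra.of ℂ (Equiv.Perm (Fin n)) (Equiv.swap a b)) :
    ∀ a b, H a * H b = H b * H a := by
  intro a b
  rcases eq_or_ne a b with rfl | hab
  · rfl
  set σ := MonoidAlgebra.of ℂ (Equiv.Perm (Fin n)) with hσ
  set c : Fin n → Fin n → ℂ := fun x y => (z x - z y)⁻¹ with hc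
  set T : Fin n → Fin n → MonoidAlgebra ℂ (Equiv.Perm (Fin n)) :=
    fun x y => (c a x * c b y) • (σ (swap a x * swap b y) - σ (swap b y * swap a x)) with hT
  set Sa := Finset.univ.filter (fun x : Fin n => x ≠ a) with hSa
  set Sb := Finset.univ.filter (fun x : Fin n => x ≠ b) with hSb
  set E := Finset.univ.filter (fun x : Fin n => x ≠ a ∧ x ≠ b) with hE
  rw [← sub_eq_zero, hH a, hH b]
  have expand : (∑ x ∈ Sa, c a x • σ (swap a x)) * (∑ y ∈ Sb, c b y • σ (swap b y)) -
      (∑ y ∈ Sb, c b y • σ (swap b y)) * (∑ x ∈ Sa, c a x • σ (swap a x)) =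
      ∑ x ∈ Sa, ∑ y ∈ Sb, T x y := by
    rw [Finset.sum_mul_sum, Finset.sum_mul_sum, Finset.sum_comm (s := Sb) (t := Sa),
      ← Finset.sum_sub_distrib]
    refine Finset.sum_congr rfl fun x _ => ?_
    rw [← Finset.sum_sub_distrib]
    refine Finset.sum_congr rfl fun y _ => ?_
    rw [hT]
    simp only [smul_mul_smul_comm, ← map_mul, smul_sub]
    rw [mul_comm (c b y) (c a x)]
  rw [expand]
  -- decompose index sets
  have hbE : b ∉ E := by simp [hE]
  have haE : a ∉ E := by simp [hE]
  have hSa' : Sa = insert b E := by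
    ext x
    simp only [hSa, hE, Finset.mem_filter, Finset.mem_univ, true_and, Finset.mem_insert]
    constructor
    · intro h; by_cases hxb : x = b
      · exact Or.inl hxb
      · exact Or.inr ⟨h, hxb⟩
    · rintro (rfl | ⟨h, _⟩)
      · exact hab.symm
      · exact h
  have hSb' : Sb = insert a E := by
    ext x
    simp only [hSb, hE, Finset.mem_filter, Finset.mem_univ, true_and, Finset.mem_insert]
    constructor
    · intro h; by_cases hxa : x = a
      · exact Or.inl hxa
      · exact Or.inr ⟨hxa, h⟩
    · rintro (rfl | ⟨_, h⟩)
      · exact hab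
      · exact h
  have hTba : T b a = 0 := by
    rw [hT]
    simp [swap_comm b a]
  have hTdisj : ∀ x ∈ E, ∀ y ∈ E, y ≠ x → T x y = 0 := by
    intro x hx y hy hyx
    rw [hE, Finset.mem_filter] at hx hy
    simp only [hT]
    rw [swap_comm_of_ne hab hy.2.1.symm hx.2.2 (Ne.symm hyx)]
    simp
  rw [hSa', Finset.sum_insert hbE, hSb']
  rw [Finset.sum_insert haE]
  have inner : ∀ x ∈ E, ∑ y ∈ insert a E, T x y = T x a + T x x := by
    intro x hx
    rw [Finset.sum_insert haE]
    congr 1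
    exact Finset.sum_eq_single_of_mem x hx (fun y hy hyx => hTdisj x hx y hy hyx)
  rw [Finset.sum_congr rfl inner, hTba, Finset.sum_add_distrib]
  rw [zero_add]
  rw [← Finset.sum_add_distrib, ← Finset.sum_add_distrib]
  refine Finset.sum_eq_zero fun e he => ?_
  rw [hE, Finset.mem_filter] at he
  obtain ⟨-, hea, heb⟩ := he
  -- key cancellation
  have hae : a ≠ e := hea.symm
  have hbe : b ≠ e := heb.symm
  have hzab : z a - z b ≠ 0 := sub_ne_zero.mpr (fun h => hab (hz h))
  have hzae : z a - z e ≠ 0 := sub_ne_zero.mpr (fun h => hae (hz h))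
  have hzbe : z b - z e ≠ 0 := sub_ne_zero.mpr (fun h => hbe (hz h))
  have hzba : z b - z a ≠ 0 := sub_ne_zero.mpr (fun h => hab (hz h).symm)
  rw [hT]
  simp only
  rw [show swap b a = swap a b from swap_comm b a,
      sw1 hab hae hbe, sw2 hab hae hbe, sw3 hab hae hbe, sw4 hab hae hbe]
  set X := σ (swap a b * swap b e) with hX
  set Y := σ (swap b e * swap a b) with hY
  rw [← add_assoc, ← neg_sub X Y, smul_neg, ← sub_eq_add_neg, ← add_smul, ← sub_smul]
  have hcoef : (c a b * c b e) + (c a e * c b a) - (c a e * c b e) = 0 := by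
    rw [hc]
    field_simp
    ring
  rw [hcoef, zero_smul]
end

section
/- In C[S_n], the product (v - J_1)(v - J_2)···(v - J_n) of linear factors in an indeterminate v involving the Jucys-Murphy elements J_a equals Σ_{σ ∈ S_n} sign(σ) σ v^{c(σ)}, where c(σ) is the number of orbits of σ on {1,...,n}. -/
/-!
Let `S_k` be the permutations fixing every point `≥ k` (points are `0, …, n-1`). By induction on
`k`, `(v - J_0)⋯(v - J_{k-1}) v^{n-k} = ∑_{σ ∈ S_k} sign σ σ v^{c(σ)}`. Multiplying by
`v - J_k = v - ∑_{b<k} (b k)`, each `σ ∈ S_k` contributes itself with one more power of `v`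
together with the products `σ (b k)`, which run bijectively over `S_{k+1} \ S_k`. For these the
sign flips and `k` is spliced into the cycle of `b`, so `c(σ (b k)) = c(σ) - 1`: the result is
again the right-hand side times `v`, and `v` is a non-zero-divisor.
-/

open Finset Equiv Equiv.Perm Polynomial

namespace Equiv.Perm

variable {α : Type*} [DecidableEq α] [Fintype α] {σ : Perm α} {b k : α}

theorem card_parts_partition (σ : Perm α) :
    σ.partition.parts.card = σ.cycleType.card + (Fintype.card α - #σ.support) := by
  simp [parts_partition]

theorem support_mul_swap_of_apply_eq (hk : σ k = k) (hbk : b ≠ k) :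
    (σ * swap b k).support = insert b (insert k σ.support) := by
  have hσb : σ b ≠ k := fun h => hbk (σ.injective (h.trans hk.symm))
  ext x
  simp only [mem_support, mem_insert, mul_apply]
  rcases eq_or_ne x b with rfl | hxb
  · simp [hk, Ne.symm hbk]
  rcases eq_or_ne x k with rfl | hxk
  · simp [hσb]
  · simp [swap_apply_of_ne_of_ne hxb hxk, hxb, hxk]

theorem card_cycleType_mul_swap_of_apply_eq (hk : σ k = k) (hbk : b ≠ k) (hb : σ b = b) :
    (σ * swap b k).cycleType.card = σ.cycleType.card + 1 := by
  have hdisj : Disjoint σ (swap b k) := fun x => by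
    by_cases hx : x = b ∨ x = k
    · rcases hx with rfl | rfl <;> simp [hb, hk]
    · exact Or.inr (swap_apply_of_ne_of_ne (not_or.1 hx).1 (not_or.1 hx).2)
  simp [hdisj.cycleType_mul, (isCycle_swap hbk).cycleType]

theorem isCycle_swap_mul_cycleOf (hk : σ k = k) (hb : σ b ≠ b) :
    (swap k b * σ.cycleOf b).IsCycle := by
  obtain ⟨t, ht⟩ : ∃ t, toList σ b = b :: t := by
    have hpos := length_toList_pos_of_mem_support σ b (mem_support.2 hb)
    cases h : toList σ b with
    | nil => simp [h] at hpos
    | cons y t =>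
      refine ⟨t, ?_⟩
      have := toList_getElem_zero σ b (mem_support.2 hb)
      simp_all
  have hkt : k ∉ toList σ b := fun h => hb ((mem_toList_iff.1 h).1.apply_eq_self_iff.2 hk)
  -- `σ.cycleOf b = formPerm (b :: t)`, and prepending `k` splices the fixed point `k` in before `b`.
  rw [← formPerm_toList, ht, ← List.formPerm_cons_cons]
  refine List.isCycle_formPerm (List.nodup_cons.2 ⟨ht ▸ hkt, ht ▸ nodup_toList σ b⟩) ?_
  have := two_le_length_toList_iff_mem_support.2 (mem_support.2 hb)
  simp only [ht, List.length_cons] at this ⊢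
  omega

theorem card_cycleType_swap_mul_of_apply_ne (hk : σ k = k) (hb : σ b ≠ b) :
    (swap k b * σ).cycleType.card = σ.cycleType.card := by
  set γ := σ.cycleOf b
  set δ := σ * γ⁻¹
  have hδγ : Disjoint δ γ := disjoint_mul_inv_of_mem_cycleFactorsFinset
    (cycleOf_mem_cycleFactorsFinset_iff.2 (mem_support.2 hb))
  have hγb : γ b ≠ b := by rwa [cycleOf_apply_self]
  have hγk : γ k = k := by
    simpa using mt (fun h => support_cycleOf_le σ b h) (by simpa using hk)
  have hδk : δ k = k := by rw [mul_apply, inv_eq_iff_eq.2 hγk.symm, hk]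
  have hδb : δ b = b := (hδγ b).resolve_right hγb
  have hδswap : Disjoint δ (swap k b) := fun x => by
    by_cases hx : x = k ∨ x = b
    · rcases hx with rfl | rfl <;> simp [hδk, hδb]
    · exact Or.inr (swap_apply_of_ne_of_ne (not_or.1 hx).1 (not_or.1 hx).2)
  have hσ : σ = δ * γ := (inv_mul_cancel_right σ γ).symm
  clear_value δ
  have hswapσ : swap k b * σ = δ * (swap k b * γ) := by
    rw [← mul_assoc, hδswap.commute.eq, mul_assoc, ← hσ]
  rw [hswapσ, (hδswap.mul_right hδγ).cycleType_mul, hσ, hδγ.cycleType_mul,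
    (isCycle_swap_mul_cycleOf hk hb).cycleType, (isCycle_cycleOf σ hb).cycleType]
  simp

theorem card_cycleType_mul_swap_of_apply_ne (hk : σ k = k) (hb : σ b ≠ b) :
    (σ * swap b k).cycleType.card = σ.cycleType.card := by
  have hconj : swap b k * (swap k b * σ) * (swap b k)⁻¹ = σ * swap b k := by
    simp [swap_comm k b, ← mul_assoc]
  rw [← hconj, cycleType_conj, card_cycleType_swap_mul_of_apply_ne hk hb]

theorem card_parts_partition_mul_swap (hk : σ k = k) (hbk : b ≠ k) :
    (σ * swap b k).partition.parts.card + 1 = σ.partition.parts.card := by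
  have hkσ : k ∉ σ.support := notMem_support.2 hk
  have hle := card_le_univ (σ * swap b k).support
  rw [card_parts_partition, card_parts_partition]
  rw [support_mul_swap_of_apply_eq hk hbk] at hle ⊢
  by_cases hb : σ b = b
  · have hbσ : b ∉ σ.support := notMem_support.2 hb
    rw [card_cycleType_mul_swap_of_apply_eq hk hbk hb]
    rw [card_insert_of_notMem (by simp [hbk, hbσ]), card_insert_of_notMem hkσ] at hle ⊢
    omega
  · rw [card_cycleType_mul_swap_of_apply_ne hk hb,
      insert_eq_of_mem (mem_insert_of_mem (mem_support.2 hb)), card_insert_of_notMem hkσ] at *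
    omega

end Equiv.Perm

section JucysMurphy

variable (R : Type*) [CommRing R]

noncomputable def jucysMurphy (n : ℕ) (a : Fin n) : MonoidAlgebra R (Perm (Fin n)) :=
  ∑ b ∈ univ.filter (fun b => b < a), MonoidAlgebra.of R (Perm (Fin n)) (swap b a)

/-- `σ.partition.parts` lists the cycle lengths of `σ`, fixed points included, so its card is the
number of orbits `c(σ)`. -/
noncomputable def signedCycleMonomial {α : Type*} [DecidableEq α] [Fintype α] (σ : Perm α) :
    (MonoidAlgebra R (Perm α))[X] :=
  ((sign σ : ℤ) : R) • (C (MonoidAlgebra.of R (Perm α) σ) * X ^ σ.partition.parts.card)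

def permsBelow (n k : ℕ) : Finset (Perm (Fin n)) :=
  univ.filter fun σ => ∀ x : Fin n, k ≤ x.val → σ x = x

variable {R}

@[simp]
theorem mem_permsBelow {n k : ℕ} {σ : Perm (Fin n)} :
    σ ∈ permsBelow n k ↔ ∀ x : Fin n, k ≤ x → σ x = x := by
  simp [permsBelow]

theorem signedCycleMonomial_mul_C_of_swap {α : Type*} [DecidableEq α] [Fintype α]
    {σ : Perm α} {b k : α} (hk : σ k = k) (hbk : b ≠ k) :
    signedCycleMonomial R σ * C (MonoidAlgebra.of R (Perm α) (swap b k)) =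
      -(signedCycleMonomial R (σ * swap b k) * X) := by
  have hsign : ((sign (σ * swap b k) : ℤ) : R) = -((sign σ : ℤ) : R) := by
    simp [Perm.sign_mul, sign_swap hbk]
  rw [signedCycleMonomial, signedCycleMonomial, hsign, ← card_parts_partition_mul_swap hk hbk,
    smul_mul_assoc, smul_mul_assoc, neg_smul, neg_neg, mul_assoc, X_pow_mul, ← mul_assoc, ← C_mul,
    ← map_mul, pow_succ, mul_assoc]

theorem signedCycleMonomial_mul_X_sub_C_jucysMurphy {n : ℕ} {σ : Perm (Fin n)} {a : Fin n}
    (ha : σ a = a) :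
    signedCycleMonomial R σ * (X - C (jucysMurphy R n a)) =
      (signedCycleMonomial R σ +
        ∑ b ∈ univ.filter (fun b => b < a), signedCycleMonomial R (σ * swap b a)) * X := by
  have hswap : ∀ b ∈ univ.filter (fun b => b < a),
      signedCycleMonomial R σ * C (MonoidAlgebra.of R _ (swap b a)) =
        -(signedCycleMonomial R (σ * swap b a) * X) := fun b hb =>
    signedCycleMonomial_mul_C_of_swap ha (mem_filter.1 hb).2.ne
  rw [jucysMurphy, map_sum, mul_sub, mul_sum, sum_congr rfl hswap, sum_neg_distrib, sub_neg_eq_add,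
    add_mul, sum_mul]

theorem permsBelow_zero (n : ℕ) : permsBelow n 0 = {1} := by
  ext σ
  simp [permsBelow, Perm.ext_iff]

theorem permsBelow_of_le {n k : ℕ} (h : n ≤ k) : permsBelow n k = univ :=
  filter_true_of_mem fun _ _ x hx => absurd (x.isLt.trans_le h) hx.not_gt

theorem filter_permsBelow_succ {n : ℕ} (a : Fin n) :
    (permsBelow n (a + 1)).filter (fun τ => τ a = a) = permsBelow n a := by
  ext σ
  simp only [mem_filter, mem_permsBelow]
  refine ⟨fun ⟨h, ha⟩ x hx => ?_, fun h => ⟨fun x hx => h x (by omega), h a le_rfl⟩⟩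
  rcases hx.eq_or_lt with hx | hx
  · rwa [show x = a from Fin.ext hx.symm]
  · exact h x hx

theorem sum_permsBelow_mul_swap {M : Type*} [AddCommMonoid M] {n : ℕ} (a : Fin n)
    (f : Perm (Fin n) → M) :
    ∑ σ ∈ permsBelow n a, ∑ b ∈ univ.filter (fun b => b < a), f (σ * swap b a) =
      ∑ τ ∈ (permsBelow n (a + 1)).filter (fun τ => τ a ≠ a), f τ := by
  rw [← sum_product']
  refine sum_nbij' (fun p => p.1 * swap p.2 a) (fun τ => (τ * swap (τ⁻¹ a) a, τ⁻¹ a))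
    ?_ ?_ ?_ ?_ (fun _ _ => rfl)
  · rintro ⟨σ, b⟩ hp
    simp only [mem_product, mem_filter, mem_univ, true_and, mem_permsBelow] at hp ⊢
    obtain ⟨hσ, hba⟩ := hp
    have hσa : σ a = a := hσ a le_rfl
    refine ⟨fun x hx => ?_, ?_⟩
    · have hxb : x ≠ b := by rintro rfl; omega
      have hxa : x ≠ a := by rintro rfl; omega
      rw [mul_apply, swap_apply_of_ne_of_ne hxb hxa, hσ x (by omega)]
    · rw [mul_apply, swap_apply_right, ← hσa]
      exact σ.injective.ne hba.ne
  · intro τ hτ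
    simp only [mem_product, mem_filter, mem_univ, true_and, mem_permsBelow] at hτ ⊢
    obtain ⟨hτ, hτa⟩ := hτ
    have hb : τ (τ⁻¹ a) = a := τ.apply_symm_apply a
    have hba : τ⁻¹ a ≠ a := fun h => hτa (by rwa [h] at hb)
    have hba' : ¬ (a : ℕ) + 1 ≤ τ⁻¹ a := fun h => hba (by rw [← hτ _ h, hb])
    refine ⟨fun x hx => ?_, lt_of_le_of_ne (Fin.le_def.2 (by omega)) hba⟩
    rcases hx.eq_or_lt with hx | hx
    · rw [show x = a from Fin.ext hx.symm, mul_apply, swap_apply_right, hb]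
    · have hxb : x ≠ τ⁻¹ a := by rintro rfl; omega
      have hxa : x ≠ a := by rintro rfl; omega
      rw [mul_apply, swap_apply_of_ne_of_ne hxb hxa, hτ x hx]
  · rintro ⟨σ, b⟩ hp
    simp only [mem_product, mem_filter, mem_univ, true_and, mem_permsBelow] at hp
    have hinv : (σ * swap b a)⁻¹ a = b := by
      rw [inv_eq_iff_eq, mul_apply, swap_apply_left, hp.1 a le_rfl]
    simp only [hinv, mul_assoc, swap_mul_self, mul_one]
  · intro τ _
    simp [mul_assoc]

theorem prod_take_X_sub_C_jucysMurphy_mul_X_pow {n k : ℕ} (hk : k ≤ n) :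
    (((List.finRange n).map fun a => X - C (jucysMurphy R n a)).take k).prod * X ^ (n - k) =
      ∑ σ ∈ permsBelow n k, signedCycleMonomial R σ := by
  induction k with
  | zero =>
    simp [permsBelow_zero, signedCycleMonomial, card_parts_partition, ← MonoidAlgebra.one_def]
  | succ k ih =>
    obtain ⟨a, rfl⟩ : ∃ a : Fin n, (a : ℕ) = k := ⟨⟨k, hk⟩, rfl⟩
    set l := (List.finRange n).map fun a => X - C (jucysMurphy R n a)
    have hl : (l.take (a + 1)).prod = (l.take a).prod * (X - C (jucysMurphy R n a)) := by
      rw [List.prod_take_succ _ _ (by simp [l])]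
      simp [l]
    apply isRegular_X.right
    calc (l.take (a + 1)).prod * X ^ (n - (a + 1)) * X
        = (l.take a).prod * X ^ (n - a) * (X - C (jucysMurphy R n a)) := by
          rw [hl, show n - a = n - (a + 1) + 1 by omega, mul_assoc, mul_assoc, ← pow_succ,
            ← (commute_X_pow _ _).eq, ← mul_assoc]
      _ = (∑ σ ∈ permsBelow n a, signedCycleMonomial R σ +
            ∑ σ ∈ permsBelow n a, ∑ b ∈ univ.filter (fun b => b < a),
              signedCycleMonomial R (σ * swap b a)) * X := by
          rw [ih (by omega), sum_mul, ← sum_add_distrib, sum_mul]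
          exact sum_congr rfl fun σ hσ =>
            signedCycleMonomial_mul_X_sub_C_jucysMurphy (mem_permsBelow.1 hσ a le_rfl)
      _ = (∑ σ ∈ permsBelow n (a + 1), signedCycleMonomial R σ) * X := by
          rw [sum_permsBelow_mul_swap, ← filter_permsBelow_succ,
            sum_filter_add_sum_filter_not]

end JucysMurphy

/-- In `ℂ[S_n][v]`, the product `(v - J_1)(v - J_2)⋯(v - J_n)` of linear
factors involving the Jucys-Murphy elements equals `∑_{σ ∈ S_n} sign σ • σ v^{c(σ)}`,
where `c σ` is the number of orbits of `σ` on `{1, ..., n}`. -/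
theorem stmt_2 (n : ℕ)
    (J : Fin n → MonoidAlgebra ℂ (Equiv.Perm (Fin n)))
    (hJ : ∀ a, J a = ∑ b ∈ Finset.univ.filter (fun b => b < a),
      MonoidAlgebra.of ℂ (Equiv.Perm (Fin n)) (Equiv.swap b a))
    (c : Equiv.Perm (Fin n) → ℕ)
    (hc : ∀ σ, c σ = σ.cycleType.card + (n - σ.support.card)) :
    ((List.finRange n).map (fun a => Polynomial.X - Polynomial.C (J a))).prod
      = ∑ σ : Equiv.Perm (Fin n),
          ((Equiv.Perm.sign σ : ℤ) : ℂ) •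
            (Polynomial.C (MonoidAlgebra.of ℂ (Equiv.Perm (Fin n)) σ) * Polynomial.X ^ c σ) := by
  obtain rfl : J = jucysMurphy ℂ n := funext hJ
  obtain rfl : c = fun σ => σ.partition.parts.card :=
    funext fun σ => by rw [hc, card_parts_partition, Fintype.card_fin]
  have h := prod_take_X_sub_C_jucysMurphy_mul_X_pow (R := ℂ) (le_refl n)
  rw [List.take_of_length_le (by simp), Nat.sub_self, pow_zero, mul_one,
    permsBelow_of_le le_rfl] at h
  exact h
end

section
/- In the group algebra C[S_n] with a parameter ℏ ∈ C, the following identity holds for any distinct a,i,j ∈ {1,...,n} and an indeterminate u: (1 - σ_{i,j})(u - ℏ + ℏσ_{a,i})(u + ℏσ_{a,j}) = (u - ℏ)(1 - σ_{i,j})(u + ℏσ_{a,i} + ℏσ_{a,j}). -/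
/-!
Write `s = σ_{i,j}`, `p = σ_{a,i}`, `q = σ_{a,j}`. Since `σ_{a,i}` conjugates `σ_{a,j}` into
`σ_{i,j}`, we have `s p = p q`, hence `(1 - s)(p q + p) = p q + p - p q² - p q = 0`.
Both sides of the identity are `C (1 - s)` times a product of two monic linear polynomials in
`u` (the scalar `u - ℏ` commutes with `1 - s`); the linear coefficients agree, and the constant
terms `ℏ² (p - 1) q` and `-ℏ² (p + q)` differ by `ℏ² (p q + p)`, which `1 - s` kills.
-/

open Polynomial

theorem X_add_C_mul_X_add_C {R : Type*} [Ring R] (b d : R) :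
    (X + C b) * (X + C d) = X ^ 2 + C (b + d) * X + C (b * d) := by
  rw [add_mul, mul_add, mul_add, X_mul_C d, map_add, map_mul, add_mul, sq]
  abel

theorem C_mul_X_add_C_mul_X_add_C_eq {R : Type*} [Ring R] {c b d e f : R}
    (hsum : b + d = e + f) (hprod : c * (b * d) = c * (e * f)) :
    C c * (X + C b) * (X + C d) = C c * (X + C e) * (X + C f) := by
  rw [mul_assoc, mul_assoc, X_add_C_mul_X_add_C, X_add_C_mul_X_add_C, hsum]
  simp only [mul_add, ← map_mul, hprod]

theorem one_sub_mul_mul_add_self_eq_zero {R : Type*} [Ring R] {s p q : R}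
    (hsp : s * p = p * q) (hq : q * q = 1) : (1 - s) * (p * q + p) = 0 := by
  rw [sub_mul, one_mul, mul_add, ← mul_assoc, hsp, mul_assoc, hq, mul_one]
  abel

theorem one_sub_C_mul_linear_mul_linear_eq {k A : Type*} [CommRing k] [Ring A] [Algebra k A]
    (h : k) {s p q : A} (hsp : s * p = p * q) (hq : q * q = 1) :
    (1 - C s) * (X - C (algebraMap k A h) + C (h • p)) * (X + C (h • q))
      = (X - C (algebraMap k A h)) * (1 - C s) * (X + C (h • p) + C (h • q)) := by
  have hcomm : Commute (X - C (algebraMap k A h)) (C (1 - s)) :=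
    (commute_X _).sub_left ((Algebra.commute_algebraMap_left h (1 - s)).map C)
  rw [← map_one C, ← map_sub, hcomm.eq, sub_eq_add_neg X, ← map_neg, add_assoc, ← map_add,
    add_assoc, ← map_add]
  apply C_mul_X_add_C_mul_X_add_C_eq
  · abel
  · have hdiff : (-algebraMap k A h + h • p) * (h • q) - -algebraMap k A h * (h • p + h • q)
        = (h * h) • (p * q + p) := by
      simp only [Algebra.algebraMap_eq_smul_one, neg_mul, add_mul, mul_add, smul_mul_smul_comm,
        one_mul]
      module
    rw [← sub_eq_zero, ← mul_sub, hdiff, mul_smul_comm, one_sub_mul_mul_add_self_eq_zero hsp hq,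
      smul_zero]

theorem stmt_6_general (n : ℕ) (ℏ : ℂ) (a i j : Fin n)
    (haj : a ≠ j) (hij : i ≠ j) :
    (1 - Polynomial.C (MonoidAlgebra.of ℂ (Equiv.Perm (Fin n)) (Equiv.swap i j)))
      * (Polynomial.X - Polynomial.C (algebraMap ℂ (MonoidAlgebra ℂ (Equiv.Perm (Fin n))) ℏ)
          + Polynomial.C (ℏ • MonoidAlgebra.of ℂ (Equiv.Perm (Fin n)) (Equiv.swap a i)))
      * (Polynomial.X + Polynomial.C (ℏ • MonoidAlgebra.of ℂ (Equiv.Perm (Fin n)) (Equiv.swap a j)))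
    = (Polynomial.X - Polynomial.C (algebraMap ℂ (MonoidAlgebra ℂ (Equiv.Perm (Fin n))) ℏ))
      * (1 - Polynomial.C (MonoidAlgebra.of ℂ (Equiv.Perm (Fin n)) (Equiv.swap i j)))
      * (Polynomial.X + Polynomial.C (ℏ • MonoidAlgebra.of ℂ (Equiv.Perm (Fin n)) (Equiv.swap a i))
          + Polynomial.C (ℏ • MonoidAlgebra.of ℂ (Equiv.Perm (Fin n)) (Equiv.swap a j))) := by
  have hperm : Equiv.swap a i * Equiv.swap a j = Equiv.swap i j * Equiv.swap a i := by
    rw [Equiv.mul_swap_eq_swap_mul, Equiv.swap_apply_left,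
      Equiv.swap_apply_of_ne_of_ne haj.symm hij.symm]
  refine one_sub_C_mul_linear_mul_linear_eq ℏ ?_ ?_
  · rw [← map_mul, ← map_mul, hperm]
  · rw [← map_mul, Equiv.swap_mul_self, map_one]

/-- in `ℂ[S_n][u]`, for distinct `a, i, j` and `ℏ ∈ ℂ`,
`(1 - σ_{i,j})(u - ℏ + ℏσ_{a,i})(u + ℏσ_{a,j}) = (u - ℏ)(1 - σ_{i,j})(u + ℏσ_{a,i} + ℏσ_{a,j})`. -/
theorem stmt_6 (n : ℕ) (ℏ : ℂ) (a i j : Fin n)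
    (hai : a ≠ i) (haj : a ≠ j) (hij : i ≠ j) :
    (1 - Polynomial.C (MonoidAlgebra.of ℂ (Equiv.Perm (Fin n)) (Equiv.swap i j)))
      * (Polynomial.X - Polynomial.C (algebraMap ℂ (MonoidAlgebra ℂ (Equiv.Perm (Fin n))) ℏ)
          + Polynomial.C (ℏ • MonoidAlgebra.of ℂ (Equiv.Perm (Fin n)) (Equiv.swap a i)))
      * (Polynomial.X + Polynomial.C (ℏ • MonoidAlgebra.of ℂ (Equiv.Perm (Fin n)) (Equiv.swap a j)))
    = (Polynomial.X - Polynomial.C (algebraMap ℂ (MonoidAlgebra ℂ (Equiv.Perm (Fin n))) ℏ))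
      * (1 - Polynomial.C (MonoidAlgebra.of ℂ (Equiv.Perm (Fin n)) (Equiv.swap i j)))
      * (Polynomial.X + Polynomial.C (ℏ • MonoidAlgebra.of ℂ (Equiv.Perm (Fin n)) (Equiv.swap a i))
          + Polynomial.C (ℏ • MonoidAlgebra.of ℂ (Equiv.Perm (Fin n)) (Equiv.swap a j))) :=
  stmt_6_general n ℏ a i j haj hij
end

section
/- In C[S_n][u] with parameters z_a, z_{a+1}, ℏ ∈ C, for any distinct indices a, a+1, and any index c distinct from both (n ≥ 3), the identity ((z_a - z_{a+1})σ_{a,a+1} + ℏ)(u - z_{a+1} + ℏσ_{a+1,c})(u - z_a + ℏσ_{a,c}) = (u - z_a + ℏσ_{a+1,c})(u - z_{a+1} + ℏσ_{a,c})((z_a - z_{a+1})σ_{a,a+1} + ℏ) holds. -/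
private lemma swap_rel {α : Type*} [DecidableEq α] (p q r : α) (hpq : p ≠ q) (hqr : q ≠ r)
    (hpr : p ≠ r) :
    Equiv.swap p q * Equiv.swap q r = Equiv.swap p r * Equiv.swap p q := by
  ext i
  simp [Equiv.swap_apply_def]
  split_ifs <;> simp_all

private lemma poly_gen {R : Type*} [Ring R] (A p q p' q' : R)
    (h1 : A*(p+q) = (p'+q')*A) (h2 : A*(p*q) = p'*q'*A) :
    Polynomial.C A * (Polynomial.X + Polynomial.C p) * (Polynomial.X + Polynomial.C q)
      = (Polynomial.X + Polynomial.C p') * (Polynomial.X + Polynomial.C q') * Polynomial.C A := by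
  have hu : ∀ r : Polynomial R, Polynomial.X * r = r * Polynomial.X := fun r => Polynomial.X_mul
  have e1 : Polynomial.C A*(Polynomial.X+Polynomial.C p)*(Polynomial.X+Polynomial.C q)
      = Polynomial.C A*(Polynomial.X*Polynomial.X)
        + (Polynomial.C A*(Polynomial.C p+Polynomial.C q))*Polynomial.X
        + Polynomial.C A*(Polynomial.C p*Polynomial.C q) := by
    simp only [mul_add, add_mul, mul_assoc, hu]
    abel
  have e2 : (Polynomial.X+Polynomial.C p')*(Polynomial.X+Polynomial.C q')*Polynomial.C A
      = Polynomial.C A*(Polynomial.X*Polynomial.X)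
        + ((Polynomial.C p'+Polynomial.C q')*Polynomial.C A)*Polynomial.X
        + Polynomial.C p'*Polynomial.C q'*Polynomial.C A := by
    simp only [mul_add, add_mul, mul_assoc, hu]
    abel
  rw [e1, e2]
  simp only [← Polynomial.C_mul, ← Polynomial.C_add]
  rw [h1, h2]

private lemma coeff1 {A : Type*} [Ring A] [Algebra ℂ A] (x y z : A)
    (h1 : x*y = z*x) (h2 : y*x = x*z) (h3 : y*z = z*x) (h4 : x*z = z*y)
    (za zb ℏ : ℂ) :
    ((za-zb)•x + algebraMap ℂ A ℏ) * ((ℏ•y - algebraMap ℂ A zb) + (ℏ•z - algebraMap ℂ A za))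
    = ((ℏ•y - algebraMap ℂ A za) + (ℏ•z - algebraMap ℂ A zb)) * ((za-zb)•x + algebraMap ℂ A ℏ) := by
  simp only [Algebra.algebraMap_eq_smul_one, mul_sub, sub_mul, mul_add, add_mul,
    smul_mul_assoc, mul_smul_comm, one_mul, mul_one, h1, h2, h3, h4]
  module

private lemma coeff2 {A : Type*} [Ring A] [Algebra ℂ A] (x y z : A)
    (hx : x*x = 1) (hz : z*z = 1)
    (h1 : x*y = z*x) (h2 : y*x = x*z) (h3 : y*z = z*x) (h4 : x*z = z*y)
    (za zb ℏ : ℂ) :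
    ((za-zb)•x + algebraMap ℂ A ℏ) * ((ℏ•y - algebraMap ℂ A zb) * (ℏ•z - algebraMap ℂ A za))
    = ((ℏ•y - algebraMap ℂ A za) * (ℏ•z - algebraMap ℂ A zb)) * ((za-zb)•x + algebraMap ℂ A ℏ) := by
  have hxyz : x*(y*z) = y := by
    rw [h3, ← mul_assoc, h4, mul_assoc, h2, h4, ← mul_assoc, hz, one_mul]
  have hyzx : y*(z*x) = z := by
    rw [← mul_assoc, h3, mul_assoc, hx, mul_one]
  have hxzx : x*(z*x) = y := by rw [← mul_assoc, h4, mul_assoc, h2, h4, ← mul_assoc, hz, one_mul]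
  simp only [Algebra.algebraMap_eq_smul_one, mul_sub, sub_mul, mul_add, add_mul,
    smul_mul_assoc, mul_smul_comm, one_mul, mul_one, mul_assoc, h1, h2, h3, h4, hx, hz,
    hxyz, hyzx, hxzx]
  module

/-- in `ℂ[S_n][u]`, for adjacent indices `a`, `b = a+1` and a third index `c`,
`((z_a - z_{a+1})σ_{a,a+1} + ℏ)(u - z_{a+1} + ℏσ_{a+1,c})(u - z_a + ℏσ_{a,c})
 = (u - z_a + ℏσ_{a+1,c})(u - z_{a+1} + ℏσ_{a,c})((z_a - z_{a+1})σ_{a,a+1} + ℏ)`. -/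
theorem stmt_7 (n : ℕ) (za zb ℏ : ℂ) (a b c : Fin n)
    (hab : (a : ℕ) + 1 = (b : ℕ)) (hca : c ≠ a) (hcb : c ≠ b) :
    Polynomial.C ((za - zb) • MonoidAlgebra.of ℂ (Equiv.Perm (Fin n)) (Equiv.swap a b)
        + algebraMap ℂ (MonoidAlgebra ℂ (Equiv.Perm (Fin n))) ℏ)
      * (Polynomial.X - Polynomial.C (algebraMap ℂ (MonoidAlgebra ℂ (Equiv.Perm (Fin n))) zb)
          + Polynomial.C (ℏ • MonoidAlgebra.of ℂ (Equiv.Perm (Fin n)) (Equiv.swap b c)))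
      * (Polynomial.X - Polynomial.C (algebraMap ℂ (MonoidAlgebra ℂ (Equiv.Perm (Fin n))) za)
          + Polynomial.C (ℏ • MonoidAlgebra.of ℂ (Equiv.Perm (Fin n)) (Equiv.swap a c)))
    = (Polynomial.X - Polynomial.C (algebraMap ℂ (MonoidAlgebra ℂ (Equiv.Perm (Fin n))) za)
          + Polynomial.C (ℏ • MonoidAlgebra.of ℂ (Equiv.Perm (Fin n)) (Equiv.swap b c)))
      * (Polynomial.X - Polynomial.C (algebraMap ℂ (MonoidAlgebra ℂ (Equiv.Perm (Fin n))) zb)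
          + Polynomial.C (ℏ • MonoidAlgebra.of ℂ (Equiv.Perm (Fin n)) (Equiv.swap a c)))
      * Polynomial.C ((za - zb) • MonoidAlgebra.of ℂ (Equiv.Perm (Fin n)) (Equiv.swap a b)
          + algebraMap ℂ (MonoidAlgebra ℂ (Equiv.Perm (Fin n))) ℏ) := by
  have hab' : a ≠ b := by
    intro h; rw [h] at hab; omega
  have hac : a ≠ c := fun h => hca h.symm
  have hbc : b ≠ c := fun h => hcb h.symm
  -- permutation relations
  have p1 : Equiv.swap a b * Equiv.swap b c = Equiv.swap a c * Equiv.swap a b :=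
    swap_rel a b c hab' hbc hac
  have p2 : Equiv.swap b c * Equiv.swap a b = Equiv.swap a b * Equiv.swap a c := by
    have := swap_rel b a c hab'.symm hac hbc
    rw [Equiv.swap_comm b a] at this
    exact this.symm
  have p3 : Equiv.swap b c * Equiv.swap a c = Equiv.swap a c * Equiv.swap a b := by
    have := swap_rel b c a hbc hca hab'.symm
    rw [Equiv.swap_comm c a, Equiv.swap_comm b a] at this
    exact this.trans p1
  have p4 : Equiv.swap a b * Equiv.swap a c = Equiv.swap a c * Equiv.swap b c := by
    have := swap_rel a c b hac hcb hab'
    rw [Equiv.swap_comm c b] at this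
    exact this.symm
  set G := Equiv.Perm (Fin n)
  set A := MonoidAlgebra ℂ G
  set x : A := MonoidAlgebra.of ℂ G (Equiv.swap a b)
  set y : A := MonoidAlgebra.of ℂ G (Equiv.swap b c)
  set z : A := MonoidAlgebra.of ℂ G (Equiv.swap a c)
  have om : ∀ g h : G, MonoidAlgebra.of ℂ G g * MonoidAlgebra.of ℂ G h
      = MonoidAlgebra.of ℂ G (g*h) := fun g h => (map_mul (MonoidAlgebra.of ℂ G) g h).symm
  have hx : x*x = 1 := by
    rw [om, Equiv.swap_mul_self, map_one]
  have hz : z*z = 1 := by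
    rw [om, Equiv.swap_mul_self, map_one]
  have h1 : x*y = z*x := by rw [om, om, p1]
  have h2 : y*x = x*z := by rw [om, om, p2]
  have h3 : y*z = z*x := by rw [om, om, p3]
  have h4 : x*z = z*y := by rw [om, om, p4]
  have key := poly_gen ((za-zb)•x + algebraMap ℂ A ℏ)
    (ℏ•y - algebraMap ℂ A zb) (ℏ•z - algebraMap ℂ A za)
    (ℏ•y - algebraMap ℂ A za) (ℏ•z - algebraMap ℂ A zb)
    (coeff1 x y z h1 h2 h3 h4 za zb ℏ)
    (coeff2 x y z hx hz h1 h2 h3 h4 za zb ℏ)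
  have rr : ∀ (m : ℂ) (s : A),
      Polynomial.X - Polynomial.C (algebraMap ℂ A m) + Polynomial.C s
        = Polynomial.X + Polynomial.C (s - algebraMap ℂ A m) := by
    intro m s
    rw [map_sub, sub_add_eq_add_sub, add_sub_assoc]
  rw [rr, rr, rr, rr]
  exact key
end

section
/- Let p ∈ C and define the linear map Tr_m^p : C[S_{n+m}] → C[S_n] by: for σ ∈ S_{n+m}, delete all symbols greater than n from the cycle decomposition of σ to obtain τ ∈ S_n, and set Tr_m^p(σ) = p^{c(σ)-c(τ)} τ, where c(·) counts orbits. Then for any σ ∈ S_{n+m}, tr_m(ϖ_{n+m}(σ)) = ϖ_n(Tr_m^N(σ)), where tr_m : End(V^{⊗(n+m)}) → End(V^{⊗n}) is the partial trace over the last m tensor factors, V = C^N, and ϖ_k : C[S_k] → End(V^{⊗k}) is the permutation action. -/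
noncomputable section

/-- The number of orbits (cycles, including fixed points) of a permutation of `{1,...,k}`. -/
def cycN (k : ℕ) (σ : Equiv.Perm (Fin k)) : ℕ :=
  σ.cycleType.card + (k - σ.support.card)

/-- The matrix of the action of `σ ∈ S_k` on `V^{⊗k}`, `V = ℂ^N`, permuting tensor factors;
`V^{⊗k}` has basis indexed by multi-indices `Fin k → Fin N`. -/
def permMat (N k : ℕ) (σ : Equiv.Perm (Fin k)) :
    Matrix (Fin k → Fin N) (Fin k → Fin N) ℂ :=
  Matrix.of fun i j => if i ∘ σ = j then 1 else 0

/-- The partial trace over the last `m` tensor factors,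
`tr_m : End(V^{⊗(n+m)}) → End(V^{⊗n})`. -/
def ptr (N n m : ℕ) (X : Matrix (Fin (n + m) → Fin N) (Fin (n + m) → Fin N) ℂ) :
    Matrix (Fin n → Fin N) (Fin n → Fin N) ℂ :=
  Matrix.of fun i j => ∑ k : Fin m → Fin N, X (Fin.append i k) (Fin.append j k)

open Equiv Equiv.Perm

def scSetoid {k : ℕ} (σ : Perm (Fin k)) : Setoid (Fin k) :=
  ⟨σ.SameCycle, ⟨fun x => ⟨0, by simp⟩, fun h => h.symm, fun h h' => h.trans h'⟩⟩

instance {k : ℕ} (σ : Perm (Fin k)) : DecidableRel (scSetoid σ).r :=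
  fun x y => inferInstanceAs (Decidable (σ.SameCycle x y))

instance {k : ℕ} (σ : Perm (Fin k)) : DecidableEq (Quotient (scSetoid σ)) :=
  fun a b => Quotient.recOnSubsingleton₂ a b fun x y =>
    decidable_of_iff (σ.SameCycle x y) (Iff.symm Quotient.eq)

instance {k : ℕ} (σ : Perm (Fin k)) : Fintype (Quotient (scSetoid σ)) :=
  @Quotient.fintype _ _ (scSetoid σ) (fun x y => inferInstanceAs (Decidable (σ.SameCycle x y)))

theorem card_quot (k : ℕ) (σ : Perm (Fin k)) :
    Fintype.card (Quotient (scSetoid σ)) = cycN k σ := by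
  classical
  have hmem : ∀ x : Fin k, σ x ≠ x → σ.cycleOf x ∈ σ.cycleFactorsFinset := by
    intro x h
    rw [Equiv.Perm.cycleOf_mem_cycleFactorsFinset_iff]
    exact Equiv.Perm.mem_support.2 h
  set f0 : Fin k → {c // c ∈ σ.cycleFactorsFinset} ⊕ {x : Fin k // σ x = x} :=
    fun x => if h : σ x = x then Sum.inr ⟨x, h⟩ else Sum.inl ⟨σ.cycleOf x, hmem x h⟩ with hf0
  have hresp : ∀ x y : Fin k, σ.SameCycle x y → f0 x = f0 y := by
    intro x y hxy
    by_cases hx : σ x = x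
    · have hyx : y = x := by
        obtain ⟨t, ht⟩ := hxy
        rw [← ht, Equiv.Perm.zpow_apply_eq_self_of_apply_eq_self hx]
      subst hyx; rfl
    · have hy : ¬ σ y = y := by
        intro hy
        have hxy2 : x = y := by
          obtain ⟨t, ht⟩ := hxy.symm
          rw [← ht, Equiv.Perm.zpow_apply_eq_self_of_apply_eq_self hy]
        exact hx (hxy2 ▸ hy)
      rw [hf0]
      simp only [dif_neg hx, dif_neg hy]
      exact congrArg _ (Subtype.ext (hxy.cycleOf_eq))
  set φ : Quotient (scSetoid σ) → {c // c ∈ σ.cycleFactorsFinset} ⊕ {x : Fin k // σ x = x} :=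
    Quotient.lift f0 hresp with hφ
  have hval : ∀ x : Fin k, φ (Quotient.mk (scSetoid σ) x) = f0 x := fun x => rfl
  have hbij : Function.Bijective φ := by
    constructor
    · intro q1 q2
      refine Quotient.inductionOn₂ q1 q2 ?_
      intro x y h
      rw [hval, hval, hf0] at h
      dsimp only at h
      apply Quotient.sound
      show σ.SameCycle x y
      by_cases hx : σ x = x <;> by_cases hy : σ y = y
      · rw [dif_pos hx, dif_pos hy] at h
        cases h
        exact Equiv.Perm.SameCycle.refl _ _
      · rw [dif_pos hx, dif_neg hy] at h; cases h
      · rw [dif_neg hx, dif_pos hy] at h; cases h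
      · rw [dif_neg hx, dif_neg hy] at h
        simp only [Sum.inl.injEq, Subtype.mk.injEq] at h
        have hy2 : y ∈ (σ.cycleOf x).support := by
          rw [h, Equiv.Perm.mem_support_cycleOf_iff]
          exact ⟨Equiv.Perm.SameCycle.refl _ _, Equiv.Perm.mem_support.2 hy⟩
        exact ((Equiv.Perm.mem_support_cycleOf_iff).1 hy2).1
    · rintro (⟨c, hc⟩ | ⟨x, hx⟩)
      · obtain ⟨x, hcx, -⟩ := (Equiv.Perm.mem_cycleFactorsFinset_iff.1 hc).1
        have hxs : x ∈ c.support := Equiv.Perm.mem_support.2 hcx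
        have hσx : σ x ≠ x := by
          rw [← (Equiv.Perm.mem_cycleFactorsFinset_iff.1 hc).2 x hxs]; exact hcx
        refine ⟨Quotient.mk (scSetoid σ) x, ?_⟩
        rw [hval, hf0]
        dsimp only
        rw [dif_neg hσx]
        exact congrArg _ (Subtype.ext (Equiv.Perm.cycle_is_cycleOf hxs hc).symm)
      · refine ⟨Quotient.mk (scSetoid σ) x, ?_⟩
        rw [hval, hf0]
        dsimp only
        rw [dif_pos hx]
  have hcard := Fintype.card_of_bijective hbij
  rw [hcard, Fintype.card_sum, Fintype.card_coe]
  have h1 : σ.cycleType.card = σ.cycleFactorsFinset.card := by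
    simp [Equiv.Perm.cycleType]
  have h2 : Fintype.card {x : Fin k // σ x = x} = k - σ.support.card := by
    rw [Fintype.card_subtype]
    have hfil : Finset.filter (fun x => σ x = x) Finset.univ = σ.supportᶜ := by
      ext x; simp [Equiv.Perm.mem_support]
    rw [hfil, Finset.card_compl, Fintype.card_fin]
  rw [cycN, ← h1, h2]

section Main

variable {n m : ℕ}

-- pow helpers
lemma pow_add_apply (σ : Perm (Fin (n+m))) (a b : ℕ) (x : Fin (n+m)) :
    (σ ^ (a + b)) x = (σ ^ a) ((σ ^ b) x) := by
  rw [pow_add, Equiv.Perm.mul_apply]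

lemma pow_inv_cancel (σ : Perm (Fin (n+m))) (a : ℕ) (x : Fin (n+m)) :
    (σ ^ a) ((σ⁻¹ ^ a) x) = x := by
  rw [inv_pow]; simp

lemma inv_pow_cancel (σ : Perm (Fin (n+m))) (a : ℕ) (x : Fin (n+m)) :
    (σ⁻¹ ^ a) ((σ ^ a) x) = x := by
  rw [inv_pow]; simp

lemma pow_inv_pow (σ : Perm (Fin (n+m))) {l s : ℕ} (h : l ≤ s) (x : Fin (n+m)) :
    (σ ^ l) ((σ⁻¹ ^ s) x) = (σ⁻¹ ^ (s - l)) x := by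
  apply (σ ^ (s - l)).injective
  rw [← pow_add_apply, show s - l + l = s by omega, pow_inv_cancel, pow_inv_cancel]

-- Fin.append helpers
lemma app_lt {N : ℕ} (a : Fin n → Fin N) (b : Fin m → Fin N) (x : Fin (n+m)) (h : (x : ℕ) < n) :
    Fin.append a b x = a ⟨x, h⟩ := by
  have hx : x = Fin.castAdd m ⟨(x : ℕ), h⟩ := Fin.ext rfl
  conv_lhs => rw [hx]
  rw [Fin.append_left]

lemma app_ge {N : ℕ} (a : Fin n → Fin N) (b : Fin m → Fin N) (x : Fin (n+m)) (h : n ≤ (x : ℕ)) :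
    Fin.append a b x = b ⟨(x : ℕ) - n, by omega⟩ := by
  have hx : x = Fin.natAdd n ⟨(x : ℕ) - n, by have := x.isLt; omega⟩ := Fin.ext (by simp; omega)
  conv_lhs => rw [hx]
  rw [Fin.append_right]

variable (σ : Perm (Fin (n + m))) (τ : Perm (Fin n)) (K : Fin n → ℕ)

def hKprop : Prop :=
  ∀ i : Fin n,
      0 < K i ∧ (σ ^ K i) (Fin.castAdd m i) = Fin.castAdd m (τ i) ∧
        ∀ l, 0 < l → l < K i → ¬ (((σ ^ l) (Fin.castAdd m i)).val < n)

variable {σ τ K}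

lemma tau_sameCycle_of_pow (hK : hKprop σ τ K) :
    ∀ t (a b : Fin n), (σ ^ t) (Fin.castAdd m a) = Fin.castAdd m b → τ.SameCycle a b := by
  intro t
  induction t using Nat.strong_induction_on with
  | _ t ih =>
    intro a b hab
    rcases Nat.eq_zero_or_pos t with h0 | hpos
    · subst h0
      rw [pow_zero, Equiv.Perm.one_apply] at hab
      have : a = b := by
        have := congrArg Fin.val hab
        simpa using Fin.ext this
      exact this ▸ Equiv.Perm.SameCycle.refl _ _
    · obtain ⟨hKpos, hKτ, hKmin⟩ := hK a
      have hle : K a ≤ t := by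
        by_contra hlt
        push_neg at hlt
        exact (hKmin t hpos hlt) (by rw [hab]; simp)
      have step : (σ ^ (t - K a)) (Fin.castAdd m (τ a)) = Fin.castAdd m b := by
        rw [← hKτ, ← pow_add_apply, show t - K a + K a = t by omega]
        exact hab
      have h1 : τ.SameCycle (τ a) b := ih (t - K a) (by omega) (τ a) b step
      exact Equiv.Perm.SameCycle.trans (⟨(1:ℤ), by simp⟩ : τ.SameCycle a (τ a)) h1

lemma tau_sameCycle (hK : hKprop σ τ K) {a b : Fin n}
    (h : σ.SameCycle (Fin.castAdd m a) (Fin.castAdd m b)) : τ.SameCycle a b := by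
  obtain ⟨t, -, -, ht⟩ := h.exists_pow_eq σ
  exact tau_sameCycle_of_pow hK t a b ht

lemma sigma_sameCycle (hK : hKprop σ τ K) {a b : Fin n}
    (h : τ.SameCycle a b) : σ.SameCycle (Fin.castAdd m a) (Fin.castAdd m b) := by
  have hstep : ∀ a : Fin n, σ.SameCycle (Fin.castAdd m a) (Fin.castAdd m (τ a)) := fun a =>
    ⟨(K a : ℤ), by rw [zpow_natCast]; exact (hK a).2.1⟩
  have hpow : ∀ (s : ℕ) (a : Fin n), σ.SameCycle (Fin.castAdd m a) (Fin.castAdd m ((τ ^ s) a)) := by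
    intro s
    induction s with
    | zero => intro a; simp; exact Equiv.Perm.SameCycle.refl _ _
    | succ s ihs =>
      intro a
      have h1 := (hstep a).trans (ihs (τ a))
      have : (τ ^ (s + 1)) a = (τ ^ s) (τ a) := by
        rw [pow_succ, Equiv.Perm.mul_apply]
      rw [this]
      exact h1
  obtain ⟨t, -, -, ht⟩ := h.exists_pow_eq τ
  exact ht ▸ hpow t a

end Main

section Main2

variable {n m : ℕ}

def Msm (σ : Perm (Fin (n + m))) (x : Fin (n + m)) : Prop :=
  ∃ y : Fin (n + m), σ.SameCycle x y ∧ (y : ℕ) < n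

instance (σ : Perm (Fin (n + m))) : DecidablePred (Msm σ) := fun x =>
  inferInstanceAs (Decidable (∃ y, σ.SameCycle x y ∧ (y : ℕ) < n))

lemma Msm_invariant (σ : Perm (Fin (n + m))) {x y : Fin (n + m)} (h : σ.SameCycle x y) :
    Msm σ x ↔ Msm σ y :=
  ⟨fun ⟨z, hz, hz2⟩ => ⟨z, h.symm.trans hz, hz2⟩, fun ⟨z, hz, hz2⟩ => ⟨z, h.trans hz, hz2⟩⟩

def MQ (σ : Perm (Fin (n + m))) : Quotient (scSetoid σ) → Prop :=
  Quotient.lift (Msm σ) (fun _ _ h => propext (Msm_invariant σ h))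

lemma MQ_mk (σ : Perm (Fin (n + m))) (x : Fin (n + m)) :
    MQ σ (Quotient.mk (scSetoid σ) x) = Msm σ x := rfl

instance (σ : Perm (Fin (n + m))) : DecidablePred (MQ σ) := fun q =>
  Quotient.recOnSubsingleton q (fun x => inferInstanceAs (Decidable (Msm σ x)))

lemma exM (σ : Perm (Fin (n + m))) (x : Fin (n + m)) (hx : n ≤ (x : ℕ)) (h : Msm σ x) :
    ∃ s, 0 < s ∧ (((σ⁻¹ ^ s) x : Fin (n + m)) : ℕ) < n := by
  obtain ⟨y, hsc, hy⟩ := h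
  obtain ⟨t, -, -, ht⟩ := hsc.symm.exists_pow_eq σ
  refine ⟨t, ?_, ?_⟩
  · rcases Nat.eq_zero_or_pos t with h0 | h0
    · subst h0; simp at ht; omega
    · exact h0
  · rw [← ht, inv_pow_cancel]; exact hy

lemma Msm_of_ex (σ : Perm (Fin (n + m))) (x : Fin (n + m))
    (h : ∃ s, 0 < s ∧ (((σ⁻¹ ^ s) x : Fin (n + m)) : ℕ) < n) : Msm σ x := by
  obtain ⟨s, -, hs⟩ := h
  exact ⟨(σ⁻¹ ^ s) x, ⟨-(s : ℤ), by simp [zpow_neg, zpow_natCast, inv_pow]⟩, hs⟩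

def back (σ : Perm (Fin (n + m))) (x : Fin (n + m))
    (h : ∃ s, 0 < s ∧ (((σ⁻¹ ^ s) x : Fin (n + m)) : ℕ) < n) : Fin n :=
  ⟨(((σ⁻¹ ^ Nat.find h) x : Fin (n + m)) : ℕ), (Nat.find_spec h).2⟩

def kf {N : ℕ} (σ : Perm (Fin (n + m))) (j : Fin n → Fin N)
    (f : {q : Quotient (scSetoid σ) // ¬ MQ σ q} → Fin N) : Fin m → Fin N :=
  fun t =>
    if h : Msm σ (Fin.natAdd n t) then
      j (back σ _ (exM σ _ (by simp) h))
    else f ⟨Quotient.mk (scSetoid σ) (Fin.natAdd n t), by rw [MQ_mk]; exact h⟩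

lemma kf_spec1 {N : ℕ} (σ : Perm (Fin (n + m))) (j : Fin n → Fin N)
    (f : {q : Quotient (scSetoid σ) // ¬ MQ σ q} → Fin N) (t : Fin m) (x : Fin (n + m))
    (hxt : Fin.natAdd n t = x) (h : ∃ s, 0 < s ∧ (((σ⁻¹ ^ s) x : Fin (n + m)) : ℕ) < n) :
    kf σ j f t = j (back σ x h) := by
  subst hxt
  rw [kf, dif_pos (Msm_of_ex σ _ h)]

lemma kf_spec2 {N : ℕ} (σ : Perm (Fin (n + m))) (j : Fin n → Fin N)
    (f : {q : Quotient (scSetoid σ) // ¬ MQ σ q} → Fin N) (t : Fin m) (x : Fin (n + m))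
    (hxt : Fin.natAdd n t = x) (h : ¬ Msm σ x) (hq : ¬ MQ σ (Quotient.mk (scSetoid σ) x)) :
    kf σ j f t = f ⟨Quotient.mk (scSetoid σ) x, hq⟩ := by
  subst hxt
  rw [kf, dif_neg h]

end Main2

section Main3

variable {n m N : ℕ} {σ : Perm (Fin (n + m))} {τ : Perm (Fin n)} {K : Fin n → ℕ}

lemma inv_pow_succ_apply (σ : Perm (Fin (n + m))) (s : ℕ) (x : Fin (n + m)) :
    (σ⁻¹ ^ (s + 1)) (σ x) = (σ⁻¹ ^ s) x := by
  rw [pow_succ, Equiv.Perm.mul_apply]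
  simp

lemma K_char (hK : hKprop σ τ K) {a : Fin n} {s : ℕ}
    (hs : (((σ ^ (s + 1)) (Fin.castAdd m a) : Fin (n + m)) : ℕ) < n)
    (hlarge : ∀ l, 1 ≤ l → l ≤ s → n ≤ (((σ ^ l) (Fin.castAdd m a) : Fin (n + m)) : ℕ)) :
    K a = s + 1 := by
  obtain ⟨hpos, hτ, hmin⟩ := hK a
  rcases lt_trichotomy (K a) (s + 1) with h | h | h
  · exfalso
    have := hlarge (K a) (by omega) (by omega)
    rw [hτ] at this
    simp at this
    omega
  · exact h
  · exact absurd hs (hmin (s + 1) (by omega) h)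

lemma K_one (hK : hKprop σ τ K) {a : Fin n}
    (h : ((σ (Fin.castAdd m a) : Fin (n + m)) : ℕ) < n) :
    σ (Fin.castAdd m a) = Fin.castAdd m (τ a) := by
  have h1 : K a = 1 := by
    apply K_char hK (s := 0)
    · rw [pow_one]; exact h
    · intro l hl1 hl2; omega
  have := (hK a).2.1
  rw [h1, pow_one] at this
  exact this

lemma find_succ (σ : Perm (Fin (n + m))) (x : Fin (n + m)) (hx : n ≤ (x : ℕ))
    (h : ∃ s, 0 < s ∧ (((σ⁻¹ ^ s) x : Fin (n + m)) : ℕ) < n)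
    (h' : ∃ s, 0 < s ∧ (((σ⁻¹ ^ s) (σ x) : Fin (n + m)) : ℕ) < n) :
    Nat.find h' = Nat.find h + 1 ∧ back σ (σ x) h' = back σ x h := by
  have hub : Nat.find h' ≤ Nat.find h + 1 :=
    Nat.find_le ⟨by omega, by rw [inv_pow_succ_apply]; exact (Nat.find_spec h).2⟩
  have hpos' : 0 < Nat.find h' := (Nat.find_spec h').1
  have hval : (σ⁻¹ ^ Nat.find h') (σ x) = (σ⁻¹ ^ (Nat.find h' - 1)) x := by
    conv_lhs => rw [show Nat.find h' = (Nat.find h' - 1) + 1 by omega]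
    rw [inv_pow_succ_apply]
  have hne : Nat.find h' - 1 ≠ 0 := by
    intro h0
    rw [h0] at hval
    have := (Nat.find_spec h').2
    rw [hval] at this
    simp at this
    omega
  have hlb : Nat.find h ≤ Nat.find h' - 1 :=
    Nat.find_le ⟨by omega, by rw [← hval]; exact (Nat.find_spec h').2⟩
  have heq : Nat.find h' = Nat.find h + 1 := by omega
  refine ⟨heq, ?_⟩
  apply Fin.ext
  show (((σ⁻¹ ^ Nat.find h') (σ x) : Fin (n + m)) : ℕ) = _
  rw [hval, show Nat.find h' - 1 = Nat.find h by omega]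
  rfl

lemma find_one (σ : Perm (Fin (n + m))) (x : Fin (n + m)) (hx : (x : ℕ) < n)
    (h' : ∃ s, 0 < s ∧ (((σ⁻¹ ^ s) (σ x) : Fin (n + m)) : ℕ) < n) :
    back σ (σ x) h' = ⟨(x : ℕ), hx⟩ := by
  have h1 : (σ⁻¹ ^ 1) (σ x) = x := by rw [pow_one]; simp
  have hub : Nat.find h' ≤ 1 := Nat.find_le ⟨by omega, by rw [h1]; exact hx⟩
  have heq : Nat.find h' = 1 := by
    have := (Nat.find_spec h').1; omega
  apply Fin.ext
  show (((σ⁻¹ ^ Nat.find h') (σ x) : Fin (n + m)) : ℕ) = (x : ℕ)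
  rw [heq, h1]

variable {i : Fin n → Fin N} {j : Fin n → Fin N} {kk : Fin m → Fin N}

lemma sol_pt (hk : Fin.append i kk ∘ σ = Fin.append j kk) (x : Fin (n + m)) :
    Fin.append i kk (σ x) = Fin.append j kk x := congrFun hk x

lemma sol_const (hk : Fin.append i kk ∘ σ = Fin.append j kk) (x : Fin (n + m))
    (hx : n ≤ (x : ℕ)) : Fin.append i kk (σ x) = Fin.append i kk x := by
  rw [sol_pt hk x, app_ge _ _ _ hx, app_ge _ _ _ hx]

lemma sol_const_class (hk : Fin.append i kk ∘ σ = Fin.append j kk) {x y : Fin (n + m)}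
    (hfree : ¬ Msm σ x) (hsc : σ.SameCycle x y) :
    Fin.append i kk x = Fin.append i kk y := by
  obtain ⟨t, -, -, ht⟩ := hsc.exists_pow_eq σ
  suffices h : ∀ r, Fin.append i kk ((σ ^ r) x) = Fin.append i kk x by rw [← ht, h]
  intro r
  induction r with
  | zero => simp
  | succ r ihr =>
    have hlarge : n ≤ (((σ ^ r) x : Fin (n + m)) : ℕ) := by
      by_contra hs
      push_neg at hs
      exact hfree ⟨(σ ^ r) x, ⟨(r : ℤ), by simp [zpow_natCast]⟩, hs⟩
    calc Fin.append i kk ((σ ^ (r + 1)) x)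
        = Fin.append i kk (σ ((σ ^ r) x)) := by rw [pow_succ', Equiv.Perm.mul_apply]
      _ = Fin.append i kk ((σ ^ r) x) := sol_const hk _ hlarge
      _ = Fin.append i kk x := ihr

lemma sol_back (hk : Fin.append i kk ∘ σ = Fin.append j kk) (x : Fin (n + m))
    (hx : n ≤ (x : ℕ)) (h : ∃ s, 0 < s ∧ (((σ⁻¹ ^ s) x : Fin (n + m)) : ℕ) < n) :
    Fin.append i kk x = j (back σ x h) := by
  have hpos : 0 < Nat.find h := (Nat.find_spec h).1
  have claim : ∀ d, d ≤ Nat.find h - 1 →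
      Fin.append i kk ((σ⁻¹ ^ (Nat.find h - 1 - d)) x) = j (back σ x h) := by
    intro d
    induction d with
    | zero =>
      intro _
      have h1 : σ ((σ⁻¹ ^ Nat.find h) x) = (σ⁻¹ ^ (Nat.find h - 1)) x := by
        have := pow_inv_pow σ (show 1 ≤ Nat.find h from hpos) x
        rw [pow_one] at this
        exact this
      rw [Nat.sub_zero, ← h1, sol_pt hk, app_lt _ _ _ (Nat.find_spec h).2]
      rfl
    | succ d ihd =>
      intro hd
      set r := Nat.find h - 1 - (d + 1) with hr
      have hr1 : σ ((σ⁻¹ ^ (r + 1)) x) = (σ⁻¹ ^ r) x := by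
        have := pow_inv_pow σ (show 1 ≤ r + 1 by omega) x
        rw [pow_one] at this
        rw [this, Nat.add_sub_cancel]
      have hlarge : n ≤ (((σ⁻¹ ^ (r + 1)) x : Fin (n + m)) : ℕ) := by
        by_contra hs
        push_neg at hs
        exact (Nat.find_min h (show r + 1 < Nat.find h by omega)) ⟨by omega, hs⟩
      calc Fin.append i kk ((σ⁻¹ ^ r) x)
          = Fin.append i kk (σ ((σ⁻¹ ^ (r + 1)) x)) := by rw [hr1]
        _ = Fin.append i kk ((σ⁻¹ ^ (r + 1)) x) := sol_const hk _ hlarge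
        _ = j (back σ x h) := by
            rw [show r + 1 = Nat.find h - 1 - d by omega]
            exact ihd (by omega)
  have := claim (Nat.find h - 1) le_rfl
  rw [Nat.sub_self, pow_zero] at this
  simpa using this

lemma sol_forces (hK : hKprop σ τ K) (hk : Fin.append i kk ∘ σ = Fin.append j kk) :
    i ∘ τ = j := by
  funext a
  have claim : ∀ r, 1 ≤ r → r ≤ K a →
      Fin.append i kk ((σ ^ r) (Fin.castAdd m a)) = j a := by
    intro r
    induction r with
    | zero => omega
    | succ r ihr =>
      intro h1 h2
      rcases Nat.eq_zero_or_pos r with h0 | h0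
      · subst h0
        rw [pow_one, sol_pt hk, Fin.append_left]
      · have hlarge : n ≤ (((σ ^ r) (Fin.castAdd m a) : Fin (n + m)) : ℕ) := by
          by_contra hs
          push_neg at hs
          exact ((hK a).2.2 r h0 (by omega)) hs
        rw [show (σ ^ (r + 1)) (Fin.castAdd m a) = σ ((σ ^ r) (Fin.castAdd m a)) from by
          rw [pow_succ', Equiv.Perm.mul_apply]]
        rw [sol_const hk _ hlarge]
        exact ihr h0 (by omega)
  have hKa := claim (K a) (hK a).1 le_rfl
  rw [(hK a).2.1, Fin.append_left] at hKa
  exact hKa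

end Main3

section Main4

variable {n m N : ℕ} {σ : Perm (Fin (n + m))} {τ : Perm (Fin n)} {K : Fin n → ℕ}
variable {i j : Fin n → Fin N}

lemma kf_sol (hK : hKprop σ τ K) (hij : i ∘ τ = j)
    (f : {q : Quotient (scSetoid σ) // ¬ MQ σ q} → Fin N) :
    Fin.append i (kf σ j f) ∘ σ = Fin.append j (kf σ j f) := by
  funext x
  show Fin.append i (kf σ j f) (σ x) = Fin.append j (kf σ j f) x
  by_cases hx : (x : ℕ) < n
  · set a : Fin n := ⟨(x : ℕ), hx⟩ with ha
    have hxa : x = Fin.castAdd m a := Fin.ext rfl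
    rw [app_lt j _ x hx]
    by_cases hσx : ((σ x : Fin (n + m)) : ℕ) < n
    · rw [app_lt i _ _ hσx]
      have h1 : σ (Fin.castAdd m a) = Fin.castAdd m (τ a) :=
        K_one hK (by rw [← hxa]; exact hσx)
      have h2 : (⟨((σ x : Fin (n + m)) : ℕ), hσx⟩ : Fin n) = τ a := by
        apply Fin.ext
        show ((σ x : Fin (n + m)) : ℕ) = ((τ a : Fin n) : ℕ)
        rw [hxa, h1]
        simp
      rw [h2, ← congrFun hij a]
      rfl
    · push_neg at hσx
      rw [app_ge i _ _ hσx]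
      have hex : ∃ s, 0 < s ∧ (((σ⁻¹ ^ s) (σ x) : Fin (n + m)) : ℕ) < n :=
        ⟨1, by norm_num, by rw [pow_one]; simpa using hx⟩
      rw [kf_spec1 σ j f _ (σ x) (Fin.ext (by simp; omega)) hex]
      rw [find_one σ x hx hex]
  · push_neg at hx
    rw [app_ge j _ x hx]
    by_cases hσx : ((σ x : Fin (n + m)) : ℕ) < n
    · rw [app_lt i _ _ hσx]
      have hMx : Msm σ x := ⟨σ x, ⟨(1 : ℤ), by simp⟩, hσx⟩
      have hex : ∃ s, 0 < s ∧ (((σ⁻¹ ^ s) x : Fin (n + m)) : ℕ) < n := exM σ x hx hMx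
      rw [kf_spec1 σ j f _ x (Fin.ext (by simp; omega)) hex]
      set b := back σ x hex with hb
      have hcb : Fin.castAdd m b = (σ⁻¹ ^ Nat.find hex) x := Fin.ext rfl
      have hlarge : ∀ l, 1 ≤ l → l ≤ Nat.find hex →
          n ≤ (((σ ^ l) (Fin.castAdd m b) : Fin (n + m)) : ℕ) := by
        intro l h1 h2
        rw [hcb, pow_inv_pow σ h2]
        rcases Nat.eq_zero_or_pos (Nat.find hex - l) with h0 | h0
        · rw [h0, pow_zero]; simpa using hx
        · by_contra hs
          push_neg at hs
          exact (Nat.find_min hex (show Nat.find hex - l < Nat.find hex by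
            have := (Nat.find_spec hex).1; omega)) ⟨h0, hs⟩
      have hsx1 : (σ ^ (Nat.find hex + 1)) (Fin.castAdd m b) = σ x := by
        rw [pow_succ', Equiv.Perm.mul_apply, hcb, pow_inv_cancel]
      have hKb : K b = Nat.find hex + 1 := K_char hK (by rw [hsx1]; exact hσx) hlarge
      have hτb : Fin.castAdd m (τ b) = σ x := by
        rw [← (hK b).2.1, hKb, hsx1]
      have hfin : τ b = ⟨((σ x : Fin (n + m)) : ℕ), hσx⟩ := by
        apply Fin.ext
        have := congrArg Fin.val hτb
        simpa using this
      rw [← hfin, ← congrFun hij b]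
      rfl
    · push_neg at hσx
      rw [app_ge i _ _ hσx]
      by_cases hM : Msm σ x
      · have hex : ∃ s, 0 < s ∧ (((σ⁻¹ ^ s) x : Fin (n + m)) : ℕ) < n := exM σ x hx hM
        have hex' : ∃ s, 0 < s ∧ (((σ⁻¹ ^ s) (σ x) : Fin (n + m)) : ℕ) < n :=
          ⟨Nat.find hex + 1, by omega, by rw [inv_pow_succ_apply]; exact (Nat.find_spec hex).2⟩
        rw [kf_spec1 σ j f _ (σ x) (Fin.ext (by simp; omega)) hex',
          kf_spec1 σ j f _ x (Fin.ext (by simp; omega)) hex]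
        rw [(find_succ σ x hx hex hex').2]
      · have hM' : ¬ Msm σ (σ x) := fun ⟨y, hy, hy2⟩ =>
          hM ⟨y, Equiv.Perm.SameCycle.trans ⟨(1 : ℤ), by simp⟩ hy, hy2⟩
        have hq : ¬ MQ σ (Quotient.mk (scSetoid σ) x) := by rw [MQ_mk]; exact hM
        have hq' : ¬ MQ σ (Quotient.mk (scSetoid σ) (σ x)) := by rw [MQ_mk]; exact hM'
        rw [kf_spec2 σ j f _ (σ x) (Fin.ext (by simp; omega)) hM' hq',
          kf_spec2 σ j f _ x (Fin.ext (by simp; omega)) hM hq]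
        congr 1
        exact Subtype.ext (Quotient.sound (show σ.SameCycle (σ x) x from ⟨(-1 : ℤ), by simp⟩))

lemma card_sol (hK : hKprop σ τ K) (hij : i ∘ τ = j) :
    Fintype.card {kk : Fin m → Fin N // Fin.append i kk ∘ σ = Fin.append j kk}
      = N ^ Fintype.card {q : Quotient (scSetoid σ) // ¬ MQ σ q} := by
  have hcf : Fintype.card ({q : Quotient (scSetoid σ) // ¬ MQ σ q} → Fin N)
      = N ^ Fintype.card {q : Quotient (scSetoid σ) // ¬ MQ σ q} := by
    rw [Fintype.card_fun, Fintype.card_fin]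
  rw [← hcf]
  apply Fintype.card_congr
  refine ⟨fun kk => fun q => Fin.append i kk.1 q.1.out,
    fun f => ⟨kf σ j f, kf_sol hK hij f⟩, ?_, ?_⟩
  · rintro ⟨kk, hkk⟩
    apply Subtype.ext
    funext t
    show kf σ j (fun q => Fin.append i kk q.1.out) t = kk t
    set x := Fin.natAdd n t with hx
    have hxg : n ≤ (x : ℕ) := by simp [hx]
    by_cases hM : Msm σ x
    · have hex := exM σ x hxg hM
      rw [kf_spec1 σ j _ t x rfl hex]
      rw [← sol_back hkk x hxg hex]
      rw [app_ge i kk x hxg]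
      congr 1
      apply Fin.ext
      simp [hx]
    · have hq : ¬ MQ σ (Quotient.mk (scSetoid σ) x) := by rw [MQ_mk]; exact hM
      rw [kf_spec2 σ j _ t x rfl hM hq]
      show Fin.append i kk (Quotient.mk (scSetoid σ) x).out = kk t
      have hsc : σ.SameCycle x ((Quotient.mk (scSetoid σ) x).out) :=
        (Quotient.exact (Quotient.out_eq (Quotient.mk (scSetoid σ) x))).symm
      rw [← sol_const_class hkk hM hsc]
      rw [app_ge i kk x hxg]
      congr 1
      apply Fin.ext
      simp [hx]
  · intro f
    funext q
    show Fin.append i (kf σ j f) q.1.out = f q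
    obtain ⟨q, hq⟩ := q
    set x := q.out with hxq
    have hmk : Quotient.mk (scSetoid σ) x = q := Quotient.out_eq q
    have hM : ¬ Msm σ x := by rw [← MQ_mk σ x, hmk]; exact hq
    have hxg : n ≤ (x : ℕ) := by
      by_contra hs
      push_neg at hs
      exact hM ⟨x, Equiv.Perm.SameCycle.refl _ _, hs⟩
    show Fin.append i (kf σ j f) x = f ⟨q, hq⟩
    rw [app_ge i _ x hxg]
    have hq' : ¬ MQ σ (Quotient.mk (scSetoid σ) x) := by rw [MQ_mk]; exact hM
    rw [kf_spec2 σ j f ⟨(x : ℕ) - n, by have := x.isLt; omega⟩ x (Fin.ext (by simp; omega)) hM hq']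
    congr 1
    exact Subtype.ext hmk

lemma cardB (hK : hKprop σ τ K) :
    cycN (n + m) σ = cycN n τ + Fintype.card {q : Quotient (scSetoid σ) // ¬ MQ σ q} := by
  rw [← card_quot, ← card_quot]
  have h1 : Fintype.card (Quotient (scSetoid τ))
      = Fintype.card {q : Quotient (scSetoid σ) // MQ σ q} := by
    let ψ : Quotient (scSetoid τ) → {q : Quotient (scSetoid σ) // MQ σ q} :=
      Quotient.lift (fun a => ⟨Quotient.mk (scSetoid σ) (Fin.castAdd m a),
        by rw [MQ_mk]; exact ⟨Fin.castAdd m a, Equiv.Perm.SameCycle.refl _ _, by simp⟩⟩)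
        (fun a b hab => Subtype.ext (Quotient.sound (sigma_sameCycle hK hab)))
    refine Fintype.card_of_bijective (f := ψ) ⟨?_, ?_⟩
    · intro q1 q2
      refine Quotient.inductionOn₂ q1 q2 ?_
      intro a b hab
      have h2 : Quotient.mk (scSetoid σ) (Fin.castAdd m a)
          = Quotient.mk (scSetoid σ) (Fin.castAdd m b) := congrArg Subtype.val hab
      exact Quotient.sound (tau_sameCycle hK (Quotient.exact h2))
    · rintro ⟨q, hq⟩
      obtain ⟨x, rfl⟩ := Quotient.exists_rep q
      have hMsm : Msm σ x := by rwa [MQ_mk] at hq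
      obtain ⟨y, hsc, hy⟩ := hMsm
      refine ⟨Quotient.mk (scSetoid τ) ⟨(y : ℕ), hy⟩, ?_⟩
      apply Subtype.ext
      show Quotient.mk (scSetoid σ) (Fin.castAdd m ⟨(y : ℕ), hy⟩) = Quotient.mk (scSetoid σ) x
      have hcy : Fin.castAdd m ⟨(y : ℕ), hy⟩ = y := Fin.ext rfl
      rw [hcy]
      exact Quotient.sound hsc.symm
  have h2 : Fintype.card (Quotient (scSetoid σ))
      = Fintype.card {q : Quotient (scSetoid σ) // MQ σ q}
        + Fintype.card {q : Quotient (scSetoid σ) // ¬ MQ σ q} := by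
    rw [← Fintype.card_sum]
    exact (Fintype.card_congr (Equiv.sumCompl (MQ σ))).symm
  rw [h2, h1]

end Main4

/-- if `τ ∈ S_n` is obtained from `σ ∈ S_{n+m}` by deleting the symbols
`> n` from the cycle decomposition of `σ` (characterized by the first-return property:
`τ i = σ^{K i} i` where `K i ≥ 1` is minimal with `σ^{K i} i ∈ {1,...,n}`), then
`tr_m(ϖ_{n+m}(σ)) = N^{c(σ) - c(τ)} ϖ_n(τ)`, i.e. `tr_m(ϖ_{n+m}(σ)) = ϖ_n(Tr_m^N(σ))`. -/
theorem stmt_9 (N n m : ℕ) (σ : Equiv.Perm (Fin (n + m))) (τ : Equiv.Perm (Fin n))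
    (K : Fin n → ℕ)
    (hK : ∀ i : Fin n,
      0 < K i ∧ (σ ^ K i) (Fin.castAdd m i) = Fin.castAdd m (τ i) ∧
        ∀ l, 0 < l → l < K i → ¬ (((σ ^ l) (Fin.castAdd m i)).val < n)) :
    ptr N n m (permMat N (n + m) σ)
      = ((N : ℂ) ^ (cycN (n + m) σ - cycN n τ)) • permMat N n τ := by
  have hKp : hKprop σ τ K := hK
  ext a b
  simp only [ptr, permMat, Matrix.of_apply, Matrix.smul_apply, smul_eq_mul]
  by_cases hij : a ∘ τ = b
  · rw [if_pos hij, mul_one, Finset.sum_boole]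
    have hcard : (Finset.univ.filter
        fun kk : Fin m → Fin N => Fin.append a kk ∘ σ = Fin.append b kk).card
          = N ^ (cycN (n + m) σ - cycN n τ) := by
      rw [← Fintype.card_subtype, card_sol hKp hij]
      congr 1
      have hB := cardB (σ := σ) (τ := τ) hKp
      omega
    rw [hcard]
    push_cast
    ring
  · rw [if_neg hij, mul_zero]
    apply Finset.sum_eq_zero
    intro kk _
    rw [if_neg]
    intro hkk
    exact hij (sol_forces hKp hkk)

end
end

section
/- Let C be the n×n upper-triangular matrix with entries C_{ab} = ∏_{c=1}^{a-1}(z_b - z_c) for a ≤ b and C_{ab} = 0 for a > b, where z_1,...,z_n are distinct complex numbers. Then C is invertible with inverse (C^{-1})_{ab} = ∏_{c=1, c≠a}^{b} (z_a - z_c)^{-1} for a ≤ b and 0 for a > b, and C Z C^{-1} = Z + Ẑ, where Z = diag(z_1,...,z_n) and Ẑ is the matrix with entries Ẑ_{ab} = δ_{a,b-1}. -/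
/-!
Read `C a b` as the Newton basis polynomial `∏_{c<a} (X - z c)` evaluated at `z b`. For
`a ≤ k ≤ b` the factors `z k - z c` with `c < a` cancel in `C a k * Ci k b`, leaving the
Lagrange nodal weight `∏_{c ∈ [a,b], c ≠ k} (z k - z c)⁻¹`. Hence every entry of
`C * diag (z ^ m) * Ci` is a sum `∑_{k ∈ [a,b]} z k ^ m * weight k`, which is the coefficient of
`X ^ (#[a,b] - 1)` in the interpolant of `X ^ m` on the nodes `z '' [a,b]`: it is `1` if
`#[a,b] = m + 1` and `0` if `#[a,b] > m + 1`. The cases `m = 0` and `m = 1` give both claims.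
-/

open Finset Matrix Polynomial Lagrange

theorem Lagrange.sum_pow_mul_nodalWeight {F ι : Type*} [Field F] [DecidableEq ι]
    {s : Finset ι} {v : ι → F} (hvs : Set.InjOn v s) {m : ℕ} (hm : m < #s) :
    ∑ i ∈ s, v i ^ m * nodalWeight s v i = if #s = m + 1 then 1 else 0 := by
  have h := coeff_eq_sum hvs (P := X ^ m) (by rw [degree_X_pow]; exact_mod_cast hm)
  simp only [coeff_X_pow, eval_pow, eval_X, div_eq_mul_inv, ← prod_inv_distrib] at h
  simp only [nodalWeight, ← h]
  exact if_congr (by omega) rfl rfl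

section NewtonMatrix

variable {F ι : Type*} [Field F] [LinearOrder ι] [LocallyFiniteOrder ι] [LocallyFiniteOrderBot ι]

def newtonMatrix (z : ι → F) : Matrix ι ι F :=
  of fun a b => if a ≤ b then ∏ c ∈ Iio a, (z b - z c) else 0

def newtonMatrixInv (z : ι → F) : Matrix ι ι F :=
  of fun a b => if a ≤ b then nodalWeight (Iic b) z a else 0

theorem Finset.Iic_erase_eq_Iio_union_Icc_erase {a b k : ι} (hak : a ≤ k) (hkb : k ≤ b) :
    (Iic b).erase k = Iio a ∪ (Icc a b).erase k := by
  ext c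
  simp only [mem_erase, mem_Iic, mem_Iio, mem_union, mem_Icc]
  constructor
  · rintro ⟨hck, hcb⟩
    exact (lt_or_ge c a).imp id fun hac => ⟨hck, hac, hcb⟩
  · rintro (hca | ⟨hck, -, hcb⟩)
    · exact ⟨(hca.trans_le hak).ne, (hca.trans_le (hak.trans hkb)).le⟩
    · exact ⟨hck, hcb⟩

theorem newtonMatrix_apply_mul_newtonMatrixInv_apply {z : ι → F} (hz : Function.Injective z)
    (a b k : ι) :
    newtonMatrix z a k * newtonMatrixInv z k b =
      if k ∈ Icc a b then nodalWeight (Icc a b) z k else 0 := by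
  simp only [newtonMatrix, newtonMatrixInv, of_apply, mem_Icc]
  by_cases hak : a ≤ k
  · by_cases hkb : k ≤ b
    · have hdisj : Disjoint (Iio a) ((Icc a b).erase k) :=
        disjoint_left.2 fun c hca hc => (mem_Icc.1 (mem_of_mem_erase hc)).1.not_gt (mem_Iio.1 hca)
      have hcancel : ∏ c ∈ Iio a, (z k - z c) * (z k - z c)⁻¹ = 1 :=
        prod_eq_one fun c hc =>
          mul_inv_cancel₀ (sub_ne_zero.2 (hz.ne ((mem_Iio.1 hc).trans_le hak).ne'))
      rw [if_pos hak, if_pos hkb, if_pos ⟨hak, hkb⟩, nodalWeight,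
        Iic_erase_eq_Iio_union_Icc_erase hak hkb, prod_union hdisj, ← mul_assoc,
        ← prod_mul_distrib, hcancel, one_mul, nodalWeight]
    · simp [hkb]
  · simp [hak]

variable [Fintype ι]

theorem newtonMatrix_mul_diagonal_mul_newtonMatrixInv_apply {z : ι → F}
    (hz : Function.Injective z) (w : ι → F) (a b : ι) :
    (newtonMatrix z * diagonal w * newtonMatrixInv z) a b =
      ∑ k ∈ Icc a b, w k * nodalWeight (Icc a b) z k := by
  rw [mul_apply]
  simp only [mul_diagonal, mul_comm _ (w _), mul_assoc,
    newtonMatrix_apply_mul_newtonMatrixInv_apply hz, mul_ite, mul_zero, sum_ite_mem, univ_inter]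

theorem newtonMatrix_mul_newtonMatrixInv {z : ι → F} (hz : Function.Injective z) :
    newtonMatrix z * newtonMatrixInv z = 1 := by
  ext a b
  have h := newtonMatrix_mul_diagonal_mul_newtonMatrixInv_apply hz (fun _ => 1) a b
  rw [diagonal_one, Matrix.mul_one] at h
  rw [h, one_apply]
  rcases le_or_gt a b with hab | hba
  · have hpos : 0 < #(Icc a b) := card_pos.2 (nonempty_Icc.2 hab)
    have hcard : #(Icc a b) = 1 ↔ a = b := by
      simp [card_eq_one, Icc_eq_singleton_iff, eq_comm]
    simpa [hcard] using sum_pow_mul_nodalWeight hz.injOn hpos (m := 0)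
  · simp [Icc_eq_empty_of_lt hba, hba.ne']

end NewtonMatrix

theorem newtonMatrix_mul_diagonal_mul_newtonMatrixInv {F : Type*} [Field F] {n : ℕ}
    {z : Fin n → F} (hz : Function.Injective z) :
    newtonMatrix z * diagonal z * newtonMatrixInv z =
      diagonal z + of fun a b : Fin n => if (a : ℕ) + 1 = b then 1 else 0 := by
  ext a b
  rw [newtonMatrix_mul_diagonal_mul_newtonMatrixInv_apply hz, Matrix.add_apply, of_apply]
  rcases lt_trichotomy a b with hab | rfl | hba
  · have hcard : #(Icc a b) = b + 1 - a := Fin.card_Icc a b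
    have hlt : (a : ℕ) < b := hab
    have h := sum_pow_mul_nodalWeight (s := Icc a b) hz.injOn (m := 1) (by omega)
    simp only [pow_one] at h
    rw [h, diagonal_apply_ne _ hab.ne, zero_add]
    exact if_congr (by omega) rfl rfl
  · simp [nodalWeight]
  · have hlt : (b : ℕ) < a := hba
    simp [Icc_eq_empty_of_lt hba, hba.ne', show (a : ℕ) + 1 ≠ b by omega]

/-- for distinct `z_1,...,z_n`, the upper-triangular matrix `C` with
`C a b = ∏_{c<a} (z_b - z_c)` (for `a ≤ b`) is invertible, with inverse given by
`(C⁻¹) a b = ∏_{c ≤ b, c ≠ a} (z_a - z_c)⁻¹` (for `a ≤ b`), and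
`C Z C⁻¹ = Z + Ẑ` where `Z = diag(z)` and `Ẑ` is the shift matrix. -/
theorem stmt_14 (n : ℕ) (z : Fin n → ℂ) (hz : Function.Injective z)
    (C Ci : Matrix (Fin n) (Fin n) ℂ)
    (hC : ∀ a b, C a b = if a ≤ b then ∏ c ∈ Finset.Iio a, (z b - z c) else 0)
    (hCi : ∀ a b, Ci a b = if a ≤ b then ∏ c ∈ (Finset.Iic b).erase a, (z a - z c)⁻¹ else 0) :
    C * Ci = 1 ∧ Ci * C = 1 ∧
      C * Matrix.diagonal z * Ci
        = Matrix.diagonal z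
            + Matrix.of (fun a b : Fin n => if (a : ℕ) + 1 = (b : ℕ) then 1 else 0) := by
  obtain rfl : C = newtonMatrix z := Matrix.ext hC
  obtain rfl : Ci = newtonMatrixInv z := Matrix.ext hCi
  have hinv := newtonMatrix_mul_newtonMatrixInv hz
  exact ⟨hinv, mul_eq_one_comm.1 hinv, newtonMatrix_mul_diagonal_mul_newtonMatrixInv hz⟩
end

section
/- Let γ ∈ S_n be the n-cycle with γ(i) = i+1 for i < n and γ(n) = 1. Then γ · T_m^{(n)}(u;p;ℏ; z_2,...,z_n,z_1) · γ^{-1} = T_m^{(n)}(u;p;ℏ; z_1,z_2,...,z_n), where T_m^{(n)}(u;p;ℏ;w_1,...,w_n) = Tr_m^p( θ_m(A^{(m)}) (u - w_n + ℏΣ_i σ_{n,n+i}) ··· (u - w_1 + ℏΣ_i σ_{1,n+i}) ). -/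
/-!
Let `Γ ∈ S_{n+m}` be `γ` acting on the first `n` symbols. Conjugation by `Γ` commutes with
`θ_m(A^{(m)})`, intertwines `Tr_m^p` with conjugation by `γ`, and turns the product for
`(z_2, …, z_n, z_1)` into the product for `(z_1, …, z_n)` with the factor of index `1` moved from
the right end to the left end. That factor commutes with `θ_m(A^{(m)})`, and it is moved back
under the trace by the cyclicity `Tr_m^p(σ_{a,b} R) = Tr_m^p(R σ_{a,b})` for `b > n` and `R`
spanned by permutations fixing `a` (here `a = 1` and `R` is `θ_m(A^{(m)})` times the other
factors): `σ_{a,b} ρ` and `ρ σ_{a,b}` are conjugate, and deleting `b` from their cycles gives the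
same permutation.
-/

noncomputable section
open Equiv Finset

namespace Bethe

/-- The number of orbits (cycles, including fixed points) of a permutation of `{1,...,k}`. -/
def cyc {k : ℕ} (σ : Equiv.Perm (Fin k)) : ℕ :=
  σ.cycleType.card + (k - σ.support.card)

variable {n m : ℕ}

lemma exists_return (σ : Equiv.Perm (Fin (n + m))) (i : Fin n) :
    ∃ k : ℕ, 0 < k ∧ ((σ ^ k) (Fin.castAdd m i)).val < n := by
  refine ⟨orderOf σ, orderOf_pos σ, ?_⟩
  simp [pow_orderOf_eq_one]

/-- The first-return time of the symbol `i ≤ n` under `σ ∈ S_{n+m}`. -/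
def retTime (σ : Equiv.Perm (Fin (n + m))) (i : Fin n) : ℕ :=
  Nat.find (exists_return σ i)

/-- The first-return map: the underlying function of the permutation obtained from `σ`
by deleting the symbols `> n` from its cycle decomposition. -/
def delFun (σ : Equiv.Perm (Fin (n + m))) (i : Fin n) : Fin n :=
  ⟨((σ ^ retTime σ i) (Fin.castAdd m i)).val, (Nat.find_spec (exists_return σ i)).2⟩

lemma delFun_injective (σ : Equiv.Perm (Fin (n + m))) : Function.Injective (delFun σ) := by
  have key : ∀ i j : Fin n, retTime σ i ≤ retTime σ j → delFun σ i = delFun σ j → i = j := by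
    intro i j hle h
    have h' : (σ ^ retTime σ i) (Fin.castAdd m i) = (σ ^ retTime σ j) (Fin.castAdd m j) := by
      apply Fin.ext
      simpa [delFun] using congrArg Fin.val h
    obtain ⟨d, hd⟩ : ∃ d, retTime σ j = retTime σ i + d :=
      ⟨retTime σ j - retTime σ i, (Nat.add_sub_cancel' hle).symm⟩
    have h2 : Fin.castAdd m i = (σ ^ d) (Fin.castAdd m j) := by
      apply (σ ^ retTime σ i).injective
      rw [h', hd, pow_add, Equiv.Perm.mul_apply]
    rcases Nat.eq_zero_or_pos d with h0 | hpos
    · have h3 : Fin.castAdd m i = Fin.castAdd m j := by simpa [h0] using h2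
      exact Fin.ext (by simpa using congrArg Fin.val h3)
    · exfalso
      have hdlt : d < retTime σ j := by
        have h1 : 0 < retTime σ i := (Nat.find_spec (exists_return σ i)).1
        omega
      exact Nat.find_min (exists_return σ j) hdlt
        ⟨hpos, by rw [← h2]; simp⟩
  intro i j h
  rcases le_total (retTime σ i) (retTime σ j) with hle | hle
  · exact key i j hle h
  · exact (key j i hle h.symm).symm

/-- The permutation `τ ∈ S_n` obtained from `σ ∈ S_{n+m}` by removing the symbols `> n`
from the cycle decomposition of `σ`. -/
def del (σ : Equiv.Perm (Fin (n + m))) : Equiv.Perm (Fin n) :=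
  Equiv.ofBijective (delFun σ) (Finite.injective_iff_bijective.mp (delFun_injective σ))

/-- The linear map `Tr_m^p : ℂ[S_{n+m}] → ℂ[S_n]`, `σ ↦ p^{c(σ) - c(τ)} τ` where
`τ = del σ` and `c` counts orbits. -/
def TrP (p : ℂ) :
    MonoidAlgebra ℂ (Equiv.Perm (Fin (n + m))) →ₗ[ℂ] MonoidAlgebra ℂ (Equiv.Perm (Fin n)) :=
  (Finsupp.lsum ℂ fun σ =>
    LinearMap.toSpanSingleton ℂ _
      ((p ^ (cyc σ - cyc (del σ))) • MonoidAlgebra.of ℂ (Equiv.Perm (Fin n)) (del σ)))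
    ∘ₗ (MonoidAlgebra.coeffLinearEquiv ℂ).toLinearMap


/-- The embedding `Fin m ↪ Fin (n+m)`, `i ↦ n + i`, inducing `θ_m : S_m → S_{n+m}`. -/
def natAddEmb (n m : ℕ) : Fin m ↪ Fin (n + m) :=
  ⟨Fin.natAdd n, fun a b h => by
    apply Fin.ext
    have := congrArg Fin.val h
    simpa using this⟩

/-- The image `θ_m(A^{(m)}) ∈ ℂ[S_{n+m}]` of the antisymmetrizer
`A^{(m)} = (1/m!) Σ_{σ ∈ S_m} sign(σ) σ` under the embedding induced by `i ↦ n+i`. -/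
def thetaA (n m : ℕ) : MonoidAlgebra ℂ (Equiv.Perm (Fin (n + m))) :=
  ((m.factorial : ℂ))⁻¹ •
    ∑ σ : Equiv.Perm (Fin m),
      ((Equiv.Perm.sign σ : ℤ) : ℂ) •
        MonoidAlgebra.of ℂ (Equiv.Perm (Fin (n + m))) (σ.viaEmbedding (natAddEmb n m))

/-- The ordered product
`(u - z_n + ℏ Σ_i σ_{n,n+i}) ⋯ (u - z_1 + ℏ Σ_i σ_{1,n+i}) ∈ ℂ[S_{n+m}]`
(the factor for the index `n` is leftmost). -/
def bigProd (n m : ℕ) (z : Fin n → ℂ) (ℏ u : ℂ) :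
    MonoidAlgebra ℂ (Equiv.Perm (Fin (n + m))) :=
  (((List.finRange n).reverse).map fun a =>
    algebraMap ℂ (MonoidAlgebra ℂ (Equiv.Perm (Fin (n + m)))) (u - z a)
      + ℏ • ∑ i : Fin m,
          MonoidAlgebra.of ℂ (Equiv.Perm (Fin (n + m)))
            (Equiv.swap (Fin.castAdd m a) (Fin.natAdd n i))).prod

/-- `T_m^{(n)}(u;p;ℏ;z_1,...,z_n) ∈ ℂ[S_n]` (the indeterminate `u` is evaluated at a
complex number): `T_m^{(n)} = Tr_m^p(θ_m(A^{(m)}) (u - z_n + ℏΣσ_{n,n+i}) ⋯ (u - z_1 + ℏΣσ_{1,n+i}))`. -/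
def Tnm (n m : ℕ) (z : Fin n → ℂ) (p ℏ u : ℂ) : MonoidAlgebra ℂ (Equiv.Perm (Fin n)) :=
  TrP p (thetaA n m * bigProd n m z ℏ u)

/-- The `σ`-orbit of `x` reaches `y` through symbols `≥ n` (0-indexed) only, i.e. through the
symbols that `del` removes from the cycles of `σ`. -/
inductive Excursion (σ : Perm (Fin (n + m))) : Fin (n + m) → Fin (n + m) → Prop
  | step (x : Fin (n + m)) : Excursion σ x (σ x)
  | cons {x y : Fin (n + m)} : n ≤ (σ x : ℕ) → Excursion σ (σ x) y → Excursion σ x y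

namespace Excursion

variable {σ : Perm (Fin (n + m))}

lemma eq_of_lt {x y y' : Fin (n + m)} (h : Excursion σ x y) (h' : Excursion σ x y')
    (hy : (y : ℕ) < n) (hy' : (y' : ℕ) < n) : y = y' := by
  induction h with
  | step x =>
    cases h' with
    | step => rfl
    | cons hx _ => omega
  | cons hx _ ih =>
    cases h' with
    | step => omega
    | cons _ h' => exact ih h' hy

lemma of_pow (x : Fin (n + m)) {K : ℕ} (hK : 0 < K)
    (hlarge : ∀ k, 0 < k → k < K → n ≤ ((σ ^ k) x : ℕ)) : Excursion σ x ((σ ^ K) x) := by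
  induction K generalizing x with
  | zero => omega
  | succ K ih =>
    rw [pow_succ, Perm.mul_apply]
    rcases Nat.eq_zero_or_pos K with rfl | hK
    · exact step x
    · refine cons (by simpa using hlarge 1 one_pos (by omega)) (ih (σ x) hK fun k hk hkK => ?_)
      simpa [← Perm.mul_apply, ← pow_succ] using hlarge (k + 1) (by omega) (by omega)

lemma conj {π : Perm (Fin (n + m))} (hπ : ∀ x, ((π x : ℕ) < n ↔ (x : ℕ) < n))
    {x y : Fin (n + m)} (h : Excursion σ x y) : Excursion (π * σ * π⁻¹) (π x) (π y) := by
  induction h with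
  | step x => simpa using step (σ := π * σ * π⁻¹) (π x)
  | @cons x y hx _ ih =>
    have hconj : (π * σ * π⁻¹) (π x) = π (σ x) := by simp
    refine cons ?_ (by simpa using ih)
    rw [hconj]
    exact not_lt.mp fun h => (not_lt.mpr hx) ((hπ _).mp h)

lemma of_swap_mul {b : Fin (n + m)} (hb : n ≤ (b : ℕ)) {x y : Fin (n + m)} (hx : x ≠ b)
    (h : Excursion (swap b (σ b) * σ) x y) : Excursion σ x y := by
  induction h with
  | step x =>
    by_cases hxb : σ x = b
    · rw [Perm.mul_apply, hxb, swap_apply_left]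
      exact cons (hxb ▸ hb) (by rw [hxb]; exact step b)
    · simpa [swap_apply_of_ne_of_ne hxb (σ.injective.ne hx)] using step x
  | @cons x y hlarge _ ih =>
    have hne : (swap b (σ b) * σ) x ≠ b := by
      rw [Perm.mul_apply, Ne, swap_apply_eq_iff, swap_apply_left]
      exact σ.injective.ne hx
    specialize ih hne
    by_cases hxb : σ x = b
    · rw [Perm.mul_apply, hxb, swap_apply_left] at hlarge ih
      exact cons (hxb ▸ hb) (hxb ▸ cons hlarge ih)
    · rw [Perm.mul_apply, swap_apply_of_ne_of_ne hxb (σ.injective.ne hx)] at hlarge ih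
      exact cons hlarge ih

end Excursion

lemma excursion_delFun (σ : Perm (Fin (n + m))) (j : Fin n) :
    Excursion σ (Fin.castAdd m j) (Fin.castAdd m (delFun σ j)) := by
  have hspec := Nat.find_spec (exists_return σ j)
  convert Excursion.of_pow (Fin.castAdd m j) hspec.1 fun k hk hkK =>
    not_lt.mp fun hsmall => Nat.find_min (exists_return σ j) hkK ⟨hk, hsmall⟩
  exact Fin.ext rfl

lemma del_eq_of_excursion {σ : Perm (Fin (n + m))} {i j : Fin n}
    (h : Excursion σ (Fin.castAdd m j) (Fin.castAdd m i)) : del σ j = i :=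
  Fin.castAdd_injective n m ((excursion_delFun σ j).eq_of_lt h (by simp) (by simp))

-- `swap b (σ b) * σ` is `σ` with `b` cut out of its cycle and made a fixed point.
lemma del_swap_apply_mul {σ : Perm (Fin (n + m))} {b : Fin (n + m)} (hb : n ≤ (b : ℕ)) :
    del (swap b (σ b) * σ) = del σ := by
  refine Equiv.ext fun j => (del_eq_of_excursion ((excursion_delFun _ j).of_swap_mul hb ?_)).symm
  rintro rfl
  simp at hb
  omega

lemma del_swap_mul_comm {ρ : Perm (Fin (n + m))} {a b : Fin (n + m)} (hb : n ≤ (b : ℕ))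
    (hρ : ρ a = a) : del (swap a b * ρ) = del (ρ * swap a b) := by
  -- cutting `b` out of the cycles of either side leaves `swap a b * ρ * swap a b`
  have hconj : swap a (ρ b) = ρ * swap a b * ρ⁻¹ := by rw [← swap_apply_apply, hρ]
  have hsρ : swap b ((swap a b * ρ) b) * (swap a b * ρ) = swap a b * ρ * swap a b := by
    have hsb : swap b (swap a b (ρ b)) = swap a b * swap a (ρ b) * (swap a b)⁻¹ := by
      rw [← swap_apply_apply, swap_apply_left]
    rw [Perm.mul_apply, hsb, hconj, swap_inv]
    simp only [mul_assoc, swap_mul_self_mul, inv_mul_cancel, mul_one]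
  have hρs : swap b ((ρ * swap a b) b) * (ρ * swap a b) = swap a b * ρ * swap a b := by
    rw [Perm.mul_apply, swap_apply_right, hρ, swap_comm, mul_assoc]
  rw [← del_swap_apply_mul hb, hsρ, ← hρs, del_swap_apply_mul hb]

def castAddHom (n m : ℕ) : Perm (Fin n) →* Perm (Fin (n + m)) :=
  Perm.viaEmbeddingHom (Fin.castAddEmb m)

lemma castAddHom_castAdd (γ : Perm (Fin n)) (j : Fin n) :
    castAddHom n m γ (Fin.castAdd m j) = Fin.castAdd m (γ j) :=
  γ.viaEmbedding_apply (Fin.castAddEmb m) j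

lemma castAddHom_of_le (γ : Perm (Fin n)) {x : Fin (n + m)} (hx : n ≤ (x : ℕ)) :
    castAddHom n m γ x = x :=
  γ.viaEmbedding_apply_of_notMem _ x (by rintro ⟨j, rfl⟩; simp at hx; omega)

lemma castAddHom_natAdd (γ : Perm (Fin n)) (i : Fin m) :
    castAddHom n m γ (Fin.natAdd n i) = Fin.natAdd n i :=
  castAddHom_of_le γ (by simp)

lemma castAddHom_lt_iff (γ : Perm (Fin n)) (x : Fin (n + m)) :
    ((castAddHom n m γ x : ℕ) < n ↔ (x : ℕ) < n) := by
  rcases lt_or_ge (x : ℕ) n with hx | hx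
  · obtain ⟨j, rfl⟩ : ∃ j : Fin n, Fin.castAdd m j = x := ⟨⟨x, hx⟩, rfl⟩
    simp [castAddHom_castAdd]
  · rw [castAddHom_of_le γ hx]

lemma del_castAddHom_conj (γ : Perm (Fin n)) (σ : Perm (Fin (n + m))) :
    del (castAddHom n m γ * σ * (castAddHom n m γ)⁻¹) = γ * del σ * γ⁻¹ := by
  refine Equiv.ext fun j => del_eq_of_excursion ?_
  simpa [castAddHom_castAdd, del] using
    (excursion_delFun σ (γ⁻¹ j)).conj (castAddHom_lt_iff γ)

lemma cyc_conj {k : ℕ} (π σ : Perm (Fin k)) : cyc (π * σ * π⁻¹) = cyc σ := by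
  rw [cyc, cyc, Perm.cycleType_conj, Perm.card_support_conj]

lemma TrP_of (p : ℂ) (σ : Perm (Fin (n + m))) :
    TrP p (MonoidAlgebra.of ℂ _ σ)
      = p ^ (cyc σ - cyc (del σ)) • MonoidAlgebra.of ℂ (Perm (Fin n)) (del σ) := by
  simp [TrP]

lemma cyc_swap_mul_comm (ρ : Perm (Fin (n + m))) (a b : Fin (n + m)) :
    cyc (swap a b * ρ) = cyc (ρ * swap a b) := by
  rw [← cyc_conj (swap a b) (ρ * swap a b), swap_inv, mul_assoc, mul_assoc, swap_mul_self,
    mul_one]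

lemma TrP_of_swap_mul_comm (p : ℂ) {ρ : Perm (Fin (n + m))} {a b : Fin (n + m)}
    (hb : n ≤ (b : ℕ)) (hρ : ρ a = a) :
    TrP p (MonoidAlgebra.of ℂ _ (swap a b * ρ)) = TrP p (MonoidAlgebra.of ℂ _ (ρ * swap a b)) := by
  rw [TrP_of, TrP_of, del_swap_mul_comm hb hρ, cyc_swap_mul_comm]

lemma TrP_conj_castAddHom (p : ℂ) (γ : Perm (Fin n))
    (X : MonoidAlgebra ℂ (Perm (Fin (n + m)))) :
    TrP p (MonoidAlgebra.of ℂ _ (castAddHom n m γ) * X * MonoidAlgebra.of ℂ _ (castAddHom n m γ)⁻¹)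
      = MonoidAlgebra.of ℂ _ γ * TrP p X * MonoidAlgebra.of ℂ _ γ⁻¹ := by
  induction X using MonoidAlgebra.induction_on with
  | of σ =>
    simp only [← map_mul, TrP_of, mul_smul_comm, smul_mul_assoc, del_castAddHom_conj, cyc_conj]
  | add X Y hX hY => simp only [mul_add, add_mul, map_add, hX, hY]
  | smul c X hX => simp only [mul_smul_comm, smul_mul_assoc, map_smul, hX]

section SpanSubalgebra

variable {k G : Type*} [CommSemiring k] [Monoid G]

def spanSubalgebra (S : Submonoid G) : Subalgebra k (MonoidAlgebra k G) :=
  (Submodule.span k (MonoidAlgebra.of k G '' S)).toSubalgebra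
    (Submodule.subset_span ⟨1, S.one_mem, map_one _⟩)
    fun x y hx hy => by
      have hxy := Submodule.mul_mem_mul hx hy
      rw [Submodule.span_mul_span] at hxy
      refine Submodule.span_mono ?_ hxy
      rintro _ ⟨_, ⟨g, hg, rfl⟩, _, ⟨h, hh, rfl⟩, rfl⟩
      exact ⟨g * h, S.mul_mem hg hh, map_mul _ _ _⟩

lemma of_mem_spanSubalgebra {S : Submonoid G} {g : G} (hg : g ∈ S) :
    MonoidAlgebra.of k G g ∈ spanSubalgebra (k := k) S :=
  Submodule.subset_span ⟨g, hg, rfl⟩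

end SpanSubalgebra

abbrev stabSubalgebra (x : Fin (n + m)) : Subalgebra ℂ (MonoidAlgebra ℂ (Perm (Fin (n + m)))) :=
  spanSubalgebra (MulAction.stabilizer (Perm (Fin (n + m))) x).toSubmonoid

lemma TrP_swap_mul_comm (p : ℂ) {a b : Fin (n + m)} (hb : n ≤ (b : ℕ))
    {R : MonoidAlgebra ℂ (Perm (Fin (n + m)))}
    (hR : R ∈ stabSubalgebra a) :
    TrP p (MonoidAlgebra.of ℂ _ (swap a b) * R) = TrP p (R * MonoidAlgebra.of ℂ _ (swap a b)) := by
  induction hR using Submodule.span_induction with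
  | mem x hx =>
    obtain ⟨ρ, hρ, rfl⟩ := hx
    rw [← map_mul, ← map_mul]
    exact TrP_of_swap_mul_comm p hb hρ
  | zero => simp
  | add x y _ _ hx hy => simp only [mul_add, add_mul, map_add, hx, hy]
  | smul c x _ hx => simp only [mul_smul_comm, smul_mul_assoc, map_smul, hx]

section ListProd

variable {M ι : Type*} [Monoid M]

lemma semiconjBy_list_prod_map {g : M} {f f' : ι → M} (l : List ι)
    (h : ∀ i, SemiconjBy g (f i) (f' i)) : SemiconjBy g (l.map f).prod (l.map f').prod := by
  induction l with
  | nil => exact SemiconjBy.one_right g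
  | cons i l ih => exact (h i).mul_right ih

lemma prod_map_reverse_finRange_succ {k : ℕ} (F : Fin (k + 1) → M) :
    ((List.finRange (k + 1)).reverse.map F).prod
      = ((List.finRange k).reverse.map (F ∘ Fin.succ)).prod * F 0 := by
  simp [List.finRange_succ, List.map_reverse]

lemma prod_map_reverse_finRange_finRotate {k : ℕ} (F : Fin (k + 1) → M) :
    ((List.finRange (k + 1)).reverse.map (F ∘ finRotate (k + 1))).prod
      = F 0 * ((List.finRange k).reverse.map (F ∘ Fin.succ)).prod := by
  simp [List.finRange_succ_last, List.map_reverse, Function.comp_def, Fin.coeSucc_eq_succ]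

end ListProd

def swapSum (n m : ℕ) (a : Fin n) : MonoidAlgebra ℂ (Perm (Fin (n + m))) :=
  ∑ i : Fin m, MonoidAlgebra.of ℂ _ (swap (Fin.castAdd m a) (Fin.natAdd n i))

def bigProdFactor (n m : ℕ) (ℏ u w : ℂ) (a : Fin n) : MonoidAlgebra ℂ (Perm (Fin (n + m))) :=
  algebraMap ℂ _ (u - w) + ℏ • swapSum n m a

lemma bigProd_eq_prod_bigProdFactor (z : Fin n → ℂ) (ℏ u : ℂ) :
    bigProd n m z ℏ u
      = ((List.finRange n).reverse.map fun a => bigProdFactor n m ℏ u (z a) a).prod :=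
  rfl

lemma viaEmbedding_natAddEmb_castAdd (π : Perm (Fin m)) (j : Fin n) :
    π.viaEmbedding (natAddEmb n m) (Fin.castAdd m j) = Fin.castAdd m j :=
  π.viaEmbedding_apply_of_notMem _ _ (by
    rintro ⟨i, hi⟩
    have hval : n + (i : ℕ) = j := congrArg Fin.val hi
    omega)

lemma viaEmbedding_natAddEmb_natAdd (π : Perm (Fin m)) (i : Fin m) :
    π.viaEmbedding (natAddEmb n m) (Fin.natAdd n i) = Fin.natAdd n (π i) :=
  π.viaEmbedding_apply (natAddEmb n m) i

lemma thetaA_mem_stabSubalgebra (a : Fin n) : thetaA n m ∈ stabSubalgebra (Fin.castAdd m a) :=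
  Subalgebra.smul_mem _ (Subalgebra.sum_mem _ fun π _ => Subalgebra.smul_mem _
    (of_mem_spanSubalgebra (viaEmbedding_natAddEmb_castAdd π a)) _) _

lemma bigProdFactor_mem_stabSubalgebra (ℏ u w : ℂ) {a a' : Fin n} (h : a ≠ a') :
    bigProdFactor n m ℏ u w a' ∈ stabSubalgebra (Fin.castAdd m a) := by
  refine add_mem (Subalgebra.algebraMap_mem _ _) (Subalgebra.smul_mem _
    (Subalgebra.sum_mem _ fun i _ => of_mem_spanSubalgebra ?_) _)
  exact swap_apply_of_ne_of_ne (by simpa using h) (by simp [Fin.ext_iff]; omega)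

lemma TrP_bigProdFactor_mul_comm (p ℏ u w : ℂ) (a : Fin n)
    {R : MonoidAlgebra ℂ (Perm (Fin (n + m)))} (hR : R ∈ stabSubalgebra (Fin.castAdd m a)) :
    TrP p (bigProdFactor n m ℏ u w a * R) = TrP p (R * bigProdFactor n m ℏ u w a) := by
  have hswap : TrP p (swapSum n m a * R) = TrP p (R * swapSum n m a) := by
    simp only [swapSum, Finset.sum_mul, Finset.mul_sum, map_sum]
    exact Finset.sum_congr rfl fun i _ => TrP_swap_mul_comm p (by simp) hR
  simp only [bigProdFactor, add_mul, mul_add, map_add, smul_mul_assoc, mul_smul_comm, map_smul,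
    hswap, Algebra.commutes]

lemma commute_viaEmbedding_natAddEmb_swapSum (π : Perm (Fin m)) (a : Fin n) :
    Commute (MonoidAlgebra.of ℂ _ (π.viaEmbedding (natAddEmb n m))) (swapSum n m a) := by
  simp only [Commute, SemiconjBy, swapSum, Finset.mul_sum, Finset.sum_mul, ← map_mul,
    mul_swap_eq_swap_mul, viaEmbedding_natAddEmb_castAdd, viaEmbedding_natAddEmb_natAdd]
  exact Equiv.sum_comp π fun i =>
    MonoidAlgebra.of ℂ _ (swap (Fin.castAdd m a) (Fin.natAdd n i) * π.viaEmbedding (natAddEmb n m))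

lemma commute_thetaA_swapSum (a : Fin n) : Commute (thetaA n m) (swapSum n m a) :=
  .smul_left (.sum_left _ _ _ fun π _ =>
    (commute_viaEmbedding_natAddEmb_swapSum π a).smul_left _) _

lemma commute_thetaA_bigProdFactor (ℏ u w : ℂ) (a : Fin n) :
    Commute (thetaA n m) (bigProdFactor n m ℏ u w a) :=
  (Algebra.commute_algebraMap_right _ _).add_right ((commute_thetaA_swapSum a).smul_right ℏ)

lemma commute_castAddHom_viaEmbedding_natAddEmb (γ : Perm (Fin n)) (π : Perm (Fin m)) :
    Commute (castAddHom n m γ) (π.viaEmbedding (natAddEmb n m)) := by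
  ext x : 1
  induction x using Fin.addCases with
  | left j => simp [castAddHom_castAdd, viaEmbedding_natAddEmb_castAdd]
  | right i => simp [castAddHom_natAdd, viaEmbedding_natAddEmb_natAdd]

lemma commute_castAddHom_thetaA (γ : Perm (Fin n)) :
    Commute (MonoidAlgebra.of ℂ _ (castAddHom n m γ)) (thetaA n m) :=
  .smul_right (.sum_right _ _ _ fun π _ =>
    ((commute_castAddHom_viaEmbedding_natAddEmb γ π).map _).smul_right _) _

lemma semiconjBy_castAddHom_swapSum (γ : Perm (Fin n)) (a : Fin n) :
    SemiconjBy (MonoidAlgebra.of ℂ _ (castAddHom n m γ)) (swapSum n m a) (swapSum n m (γ a)) := by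
  simp only [SemiconjBy, swapSum, Finset.mul_sum, Finset.sum_mul, ← map_mul,
    mul_swap_eq_swap_mul, castAddHom_castAdd, castAddHom_natAdd]

lemma semiconjBy_castAddHom_bigProdFactor (γ : Perm (Fin n)) (ℏ u w : ℂ) (a : Fin n) :
    SemiconjBy (MonoidAlgebra.of ℂ _ (castAddHom n m γ)) (bigProdFactor n m ℏ u w a)
      (bigProdFactor n m ℏ u w (γ a)) := by
  refine SemiconjBy.add_right (Algebra.commute_algebraMap_right _ _) ?_
  rw [SemiconjBy, mul_smul_comm, smul_mul_assoc, (semiconjBy_castAddHom_swapSum γ a).eq]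

/-- with `γ = finRotate n` (the cycle `i ↦ i+1`, `n ↦ 1`),
`γ T_m^{(n)}(u;p;ℏ;z_2,...,z_n,z_1) γ⁻¹ = T_m^{(n)}(u;p;ℏ;z_1,...,z_n)`. -/
theorem stmt_16 (n m : ℕ) (z : Fin n → ℂ) (p ℏ u : ℂ) :
    MonoidAlgebra.of ℂ (Equiv.Perm (Fin n)) (finRotate n)
        * Tnm n m (fun a => z (finRotate n a)) p ℏ u
        * MonoidAlgebra.of ℂ (Equiv.Perm (Fin n)) (finRotate n)⁻¹
      = Tnm n m z p ℏ u := by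
  cases n with
  | zero => simp [Subsingleton.elim (finRotate 0) 1, ← MonoidAlgebra.one_def]
  | succ k =>
    set γ := finRotate (k + 1)
    set Γ := castAddHom (k + 1) m γ
    set F : Fin (k + 1) → MonoidAlgebra ℂ (Perm (Fin (k + 1 + m))) :=
      fun a => bigProdFactor (k + 1) m ℏ u (z a) a
    set P := ((List.finRange k).reverse.map (F ∘ Fin.succ)).prod
    have hP : P ∈ stabSubalgebra (Fin.castAdd m 0) :=
      Subalgebra.list_prod_mem _ fun x hx => by
        obtain ⟨a, -, rfl⟩ := List.mem_map.mp hx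
        exact bigProdFactor_mem_stabSubalgebra ℏ u _ (Fin.succ_ne_zero a).symm
    have hrotate : MonoidAlgebra.of ℂ _ Γ * bigProd (k + 1) m (z ∘ γ) ℏ u
        = F 0 * P * MonoidAlgebra.of ℂ _ Γ := by
      rw [bigProd_eq_prod_bigProdFactor, ← prod_map_reverse_finRange_finRotate]
      exact semiconjBy_list_prod_map _ fun a => semiconjBy_castAddHom_bigProdFactor γ ℏ u _ a
    have hconj : MonoidAlgebra.of ℂ _ Γ * (thetaA (k + 1) m * bigProd (k + 1) m (z ∘ γ) ℏ u)
        * MonoidAlgebra.of ℂ _ Γ⁻¹ = F 0 * (thetaA (k + 1) m * P) := by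
      rw [← mul_assoc, (commute_castAddHom_thetaA γ).eq, mul_assoc _ (MonoidAlgebra.of ℂ _ Γ),
        hrotate, mul_assoc, mul_assoc, ← map_mul, mul_inv_cancel, map_one, mul_one,
        ← mul_assoc, ← mul_assoc, (commute_thetaA_bigProdFactor ℏ u _ 0).eq, mul_assoc]
    calc _ = TrP p (F 0 * (thetaA (k + 1) m * P)) := by
          rw [← hconj]
          exact (TrP_conj_castAddHom p γ _).symm
      _ = TrP p (thetaA (k + 1) m * P * F 0) :=
          TrP_bigProdFactor_mul_comm p ℏ u _ 0 (mul_mem (thetaA_mem_stabSubalgebra 0) hP)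
      _ = Tnm (k + 1) m z p ℏ u := by
          rw [Tnm, bigProd_eq_prod_bigProdFactor, prod_map_reverse_finRange_succ, mul_assoc]

end Bethe
end
end

section
/- Define S_1^{(n)}(u;ℏ) = ℏ Σ_{i=1}^n (u - z_n + ℏσ_{i,n})···(u - z_{i+1} + ℏσ_{i,i+1})(u - z_{i-1})···(u - z_1) in C[S_n][u]. Then S_1^{(n)}(u;ℏ) = Σ_{j=1}^n Σ_{1 ≤ i_1 < ··· < i_j ≤ n} ℏ^j σ_{i_1,i_j} σ_{i_1,i_{j-1}} ··· σ_{i_1,i_2} ∏_{a ∉ {i_1,...,i_j}} (u - z_a), where for j = 1 the empty product of transpositions is the identity. -/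
/-! Each factor `u - z_a` is central, so for fixed `i` the ordered product expands as a sum over
the sets `t ⊆ {a > i}` of positions where `ℏσ_{i,a}` is chosen: the chosen transpositions keep
their (decreasing) order and the remaining linear factors can be collected anywhere. After
multiplying by `ℏ`, the term of `(i, t)` is exactly the term of `s = {i} ∪ t` on the right, and
`(i, t) ↦ {i} ∪ t` is a bijection onto the nonempty subsets, with inverse
`s ↦ (min s, s \ {min s})`. -/

open Polynomial

theorem List.prod_map_ite_add_eq_sum {α R : Type*} [DecidableEq α] [Semiring R] {l : List α}
    (hl : l.Nodup) (p : α → Prop) [DecidablePred p] (f g : α → R)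
    (hf : ∀ a x, Commute (f a) x) :
    (l.map fun a => if p a then f a + g a else f a).prod =
      ∑ t ∈ (l.toFinset.filter p).powerset,
        ((l.filter (· ∈ t)).map g).prod * ((l.filter (· ∉ t)).map f).prod := by
  induction l with
  | nil => simp
  | cons a l ih =>
    obtain ⟨hal, hl⟩ := List.nodup_cons.1 hl
    have not_mem {t : Finset α} (ht : t ∈ (l.toFinset.filter p).powerset) : a ∉ t := fun h =>
      hal (List.mem_toFinset.1 (Finset.mem_filter.1 (Finset.mem_powerset.1 ht h)).1)
    have term {t : Finset α} (ht : a ∉ t) :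
        (((a :: l).filter (· ∈ t)).map g).prod * (((a :: l).filter (· ∉ t)).map f).prod =
          f a * (((l.filter (· ∈ t)).map g).prod * ((l.filter (· ∉ t)).map f).prod) := by
      rw [List.filter_cons_of_neg (by simpa), List.filter_cons_of_pos (by simpa), List.map_cons,
        List.prod_cons, ← mul_assoc, ← (hf a _).eq, mul_assoc]
    have term_insert {t : Finset α} :
        (((a :: l).filter (· ∈ insert a t)).map g).prod *
            (((a :: l).filter (· ∉ insert a t)).map f).prod =
          g a * (((l.filter (· ∈ t)).map g).prod * ((l.filter (· ∉ t)).map f).prod) := by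
      have h_mem : l.filter (· ∈ insert a t) = l.filter (· ∈ t) :=
        List.filter_congr fun x hx => by simp [ne_of_mem_of_not_mem hx hal]
      have h_not_mem : l.filter (· ∉ insert a t) = l.filter (· ∉ t) :=
        List.filter_congr fun x hx => by simp [ne_of_mem_of_not_mem hx hal]
      rw [List.filter_cons_of_pos (by simp), List.filter_cons_of_neg (by simp), h_mem, h_not_mem,
        List.map_cons, List.prod_cons, mul_assoc]
    rw [List.map_cons, List.prod_cons, ih hl, Finset.mul_sum, List.toFinset_cons,
      Finset.filter_insert]
    split_ifs with hpa
    · rw [Finset.sum_powerset_insert (by simp [hal]),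
        Finset.sum_congr rfl fun t ht => term (not_mem ht),
        Finset.sum_congr rfl fun t _ => term_insert, ← Finset.sum_add_distrib]
      simp only [add_mul]
    · exact (Finset.sum_congr rfl fun t ht => term (not_mem ht)).symm

theorem List.filter_finRange_mem {n : ℕ} (t : Finset (Fin n)) :
    (finRange n).filter (· ∈ t) = t.sort (· ≤ ·) :=
  ((sortedLT_finRange n).pairwise.filter _).sortedLT.eq_of_mem_iff t.sortedLT_sort (by simp)

theorem prod_finRange_filter_ne_ite_add {n : ℕ} {R : Type*} [Semiring R] (e τ : Fin n → R)
    (he : ∀ a x, Commute (e a) x) (i : Fin n) :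
    (((List.finRange n).reverse.filter (fun a => a ≠ i)).map
        fun a => if i < a then e a + τ a else e a).prod =
      ∑ t ∈ (Finset.Ioi i).powerset,
        ((t.sort (· ≤ ·)).reverse.map τ).prod *
          (((List.finRange n).filter (fun a => a ∉ insert i t)).map e).prod := by
  set l := (List.finRange n).reverse.filter (fun a => a ≠ i)
  have hl : l = ((List.finRange n).filter (fun a => a ≠ i)).reverse := List.filter_reverse ..
  have hsupp : l.toFinset.filter (i < ·) = Finset.Ioi i := by
    ext a; simpa [l] using ne_of_gt
  rw [List.prod_map_ite_add_eq_sum ((List.nodup_reverse.2 (List.nodup_finRange n)).filter _)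
    _ _ _ he, hsupp]
  refine Finset.sum_congr rfl fun t ht => ?_
  have hit : ∀ a ∈ t, i < a := fun a ha => Finset.mem_Ioi.1 (Finset.mem_powerset.1 ht ha)
  have h_mem : l.filter (· ∈ t) = (t.sort (· ≤ ·)).reverse := by
    rw [hl, List.filter_reverse, List.filter_filter, ← List.filter_finRange_mem]
    congr 1
    exact List.filter_congr fun a _ => by
      by_cases ha : a ∈ t <;> simp [ha, (hit a · |>.ne')]
  have h_not_mem : l.filter (· ∉ t) =
      ((List.finRange n).filter (fun a => a ∉ insert i t)).reverse := by
    rw [hl, List.filter_reverse, List.filter_filter]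
    congr 1
    exact List.filter_congr fun a _ => by simp [Bool.and_comm]
  rw [h_mem, h_not_mem, List.map_reverse (f := e)]
  congr 1
  exact (List.reverse_perm _).prod_eq'
    (List.pairwise_reverse.2 (List.pairwise_map.2 (List.pairwise_of_forall fun _ _ => he _ _)))

theorem Finset.min'_insert_of_subset_Ioi {α : Type*} [LinearOrder α] [LocallyFiniteOrderTop α]
    {i : α} {t : Finset α} (ht : t ⊆ Ioi i) : (insert i t).min' (insert_nonempty i t) = i :=
  (min'_eq_iff _ _ _).2 ⟨mem_insert_self i t, by
    simpa using fun b hb => (mem_Ioi.1 (ht hb)).le⟩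

theorem Finset.sum_eq_add_sum_insert_min {α M : Type*} [LinearOrder α] [Fintype α]
    [LocallyFiniteOrderTop α] [AddCommMonoid M] (F : Finset α → M) :
    ∑ s, F s = F ∅ + ∑ i, ∑ t ∈ (Ioi i).powerset, F (insert i t) := by
  rw [← add_sum_erase _ _ (mem_univ ∅), sum_sigma']
  congr 1
  have hne {s : Finset α} (hs : s ∈ univ.erase ∅) : s.Nonempty := nonempty_iff_ne_empty.2 (ne_of_mem_erase hs)
  refine (sum_bij' (fun p _ => insert p.1 p.2) (fun s hs => ⟨s.min' (hne hs), s.erase (s.min' (hne hs))⟩)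
    ?_ ?_ ?_ ?_ fun _ _ => rfl).symm
  · rintro ⟨i, t⟩ -
    simp
  · intro s hs
    simp only [mem_sigma, mem_univ, mem_powerset, true_and]
    exact fun a ha => mem_Ioi.2 <| (min'_le _ _ (mem_of_mem_erase ha)).lt_of_ne
      (ne_of_mem_erase ha).symm
  · rintro ⟨i, t⟩ hit
    have ht : t ⊆ Ioi i := mem_powerset.1 (mem_sigma.1 hit).2
    simp [min'_insert_of_subset_Ioi ht, erase_insert (notMem_Ioi_self <| ht ·)]
  · intro s hs
    exact insert_erase (min'_mem _ (hne hs))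

theorem List.prod_map_C_smul_of {K G ι : Type*} [CommSemiring K] [Monoid G] (c : K) (σ : ι → G)
    (l : List ι) :
    (l.map fun a => C (c • MonoidAlgebra.of K G (σ a))).prod =
      C (c ^ l.length • MonoidAlgebra.of K G (l.map σ).prod) := by
  rw [map_list_prod, ← List.length_map σ, ← List.length_map (MonoidAlgebra.of K G), List.smul_prod,
    map_list_prod, List.map_map, List.map_map, List.map_map]
  rfl

theorem C_algebraMap_mul_prod_C_smul_swap {K : Type*} [CommSemiring K] {n : ℕ} (ℏ : K)
    {i : Fin n} {t : Finset (Fin n)} (ht : t ⊆ Finset.Ioi i)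
    (E : (MonoidAlgebra K (Equiv.Perm (Fin n)))[X]) :
    C (algebraMap K _ ℏ) *
        (((t.sort (· ≤ ·)).reverse.map fun a =>
          C (ℏ • MonoidAlgebra.of K _ (Equiv.swap i a))).prod * E) =
      C (ℏ ^ (insert i t).card • MonoidAlgebra.of K _
          ((((insert i t).sort (· ≤ ·)).tail.reverse.map
            fun b => Equiv.swap ((insert i t).min' (Finset.insert_nonempty i t)) b).prod)) * E := by
  have hit : i ∉ t := (Finset.notMem_Ioi_self <| ht ·)
  rw [Finset.min'_insert_of_subset_Ioi ht,
    Finset.sort_insert _ (fun b hb => (Finset.mem_Ioi.1 (ht hb)).le) hit, List.tail_cons,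
    Finset.card_insert_of_notMem hit, List.prod_map_C_smul_of, ← mul_assoc, ← C_mul,
    List.length_reverse, Finset.length_sort, ← Algebra.smul_def, smul_smul, ← pow_succ']

/-- the expansion of
`S_1^{(n)}(u;ℏ) = ℏ Σ_{i=1}^n (u - z_n + ℏσ_{i,n})⋯(u - z_{i+1} + ℏσ_{i,i+1})(u - z_{i-1})⋯(u - z_1)`
in `ℂ[S_n][u]` as
`Σ_{j=1}^n Σ_{i_1<⋯<i_j} ℏ^j σ_{i_1,i_j}σ_{i_1,i_{j-1}}⋯σ_{i_1,i_2} ∏_{a∉{i_1,...,i_j}} (u - z_a)`.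
Subsets `s` of `{1,...,n}` of cardinality `j ≥ 1` encode the tuples `i_1 < ⋯ < i_j`. -/
theorem stmt_18 (n : ℕ) (z : Fin n → ℂ) (ℏ : ℂ) :
    Polynomial.C (algebraMap ℂ (MonoidAlgebra ℂ (Equiv.Perm (Fin n))) ℏ) *
      ∑ i : Fin n,
        (((List.finRange n).reverse.filter (fun a => a ≠ i)).map
          (fun a =>
            if i < a then
              Polynomial.X
                - Polynomial.C (algebraMap ℂ (MonoidAlgebra ℂ (Equiv.Perm (Fin n))) (z a))
                + Polynomial.C (ℏ • MonoidAlgebra.of ℂ (Equiv.Perm (Fin n)) (Equiv.swap i a))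
            else
              Polynomial.X
                - Polynomial.C (algebraMap ℂ (MonoidAlgebra ℂ (Equiv.Perm (Fin n))) (z a)))).prod
    = ∑ s : Finset (Fin n),
        if hs : s.Nonempty then
          Polynomial.C ((ℏ ^ s.card) •
              MonoidAlgebra.of ℂ (Equiv.Perm (Fin n))
                (((s.sort (· ≤ ·)).tail.reverse.map (fun b => Equiv.swap (s.min' hs) b)).prod))
            * (((List.finRange n).filter (fun a => a ∉ s)).map
                (fun a => Polynomial.X
                  - Polynomial.C (algebraMap ℂ (MonoidAlgebra ℂ (Equiv.Perm (Fin n))) (z a)))).prod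
        else 0 := by
  have h_central (a : Fin n) (x : (MonoidAlgebra ℂ (Equiv.Perm (Fin n)))[X]) :
      Commute (X - C (algebraMap ℂ _ (z a))) x :=
    (commute_X x).sub_left <| by
      rw [← Polynomial.algebraMap_apply]; exact Algebra.commute_algebraMap_left (z a) x
  rw [Finset.sum_eq_add_sum_insert_min, dif_neg Finset.not_nonempty_empty, zero_add,
    Finset.mul_sum]
  refine Finset.sum_congr rfl fun i _ => ?_
  rw [prod_finRange_filter_ne_ite_add _ _ h_central, Finset.mul_sum]
  refine Finset.sum_congr rfl fun t ht => ?_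
  rw [dif_pos (Finset.insert_nonempty i t),
    C_algebraMap_mul_prod_C_smul_swap ℏ (Finset.mem_powerset.1 ht)]
end

section
/- Setting ℏ = 1 and z_1 = ··· = z_n = 0, the element S_1^{(n)}(u) = Σ_{i=1}^n (u + σ_{i,n})(u + σ_{i,n-1})···(u + σ_{i,i+1}) u^{i-1} of C[S_n][u] equals n·u^{n-1} + Σ_{k=2}^n G_k^{(n)} u^{n-k}, where G_k^{(n)} = Σ_{1 ≤ i_1 < ··· < i_k ≤ n} σ_{i_1,i_2} σ_{i_2,i_3} ··· σ_{i_{k-1},i_k} is the sum of all increasing k-cycles. -/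
/-!
Since `u` is central, expanding `(u + σ_{i,n}) ⋯ (u + σ_{i,i+1})` gives one monomial for each
subset `T ⊆ {i+1, …, n}`: the product of the `σ_{i,a}`, `a ∈ T`, in decreasing order of `a`, times
`u^{n-i-|T|}`. Conjugating by transpositions shows that this product is the increasing cycle on
`{i} ∪ T`. Every nonempty `s ⊆ {1, …, n}` arises exactly once, as `{min s} ∪ T`, so
`S_1^{(n)}(u)` is the sum over nonempty `s` of the increasing cycle on `s` times `u^{n-|s|}`;
the `n` singletons give `n u^{n-1}`.
-/

open Polynomial Finset Equiv

theorem List.prod_map_X_add_C_eq_sum_powerset {R α : Type*} [Semiring R] [DecidableEq α]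
    (f : α → R) {l : List α} (hl : l.Nodup) :
    (l.map fun a => X + C (f a)).prod =
      ∑ T ∈ l.toFinset.powerset,
        C ((l.filter (· ∈ T)).map f).prod * X ^ (l.length - #T) := by
  induction l with
  | nil => simp
  | cons a l ih =>
    obtain ⟨ha, hl⟩ := List.nodup_cons.1 hl
    have ha' : a ∉ l.toFinset := by simpa using ha
    have hsubset {T} (hT : T ∈ l.toFinset.powerset) : a ∉ T ∧ #T ≤ l.length :=
      ⟨fun h => ha' (mem_powerset.1 hT h), (card_le_card (mem_powerset.1 hT)).trans
        l.toFinset_card_le⟩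
    rw [List.map_cons, List.prod_cons, ih hl, List.toFinset_cons, sum_powerset_insert ha',
      add_mul, mul_sum, mul_sum]
    congr 1 <;> refine sum_congr rfl fun T hT => ?_
    · obtain ⟨haT, hcard⟩ := hsubset hT
      have hfilter : (a :: l).filter (· ∈ T) = l.filter (· ∈ T) := by simp [haT]
      rw [hfilter, List.length_cons, Nat.sub_add_comm hcard, pow_succ', ← mul_assoc, X_mul,
        mul_assoc]
    · have haT := (hsubset hT).1
      have hfilter : (a :: l).filter (· ∈ insert a T) = a :: l.filter (· ∈ T) := by
        rw [List.filter_cons_of_pos (by simp)]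
        congr 1
        exact List.filter_congr fun x hx => by simp [show x ≠ a by rintro rfl; exact ha hx]
      rw [hfilter, List.length_cons, card_insert_of_notMem haT, Nat.add_sub_add_right,
        List.map_cons, List.prod_cons, C_mul, mul_assoc]


theorem Equiv.Perm.prod_map_swap_reverse {α : Type*} [DecidableEq α] {i : α} {l : List α}
    (hl : (i :: l).Nodup) :
    (l.reverse.map (swap i)).prod = (((i :: l).zip l).map fun p => swap p.1 p.2).prod := by
  induction l generalizing i with
  | nil => simp
  | cons a l ih =>
    obtain ⟨hi, ha, hl⟩ : i ∉ a :: l ∧ a ∉ l ∧ l.Nodup := by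
      simpa [List.nodup_cons] using hl
    -- conjugating by `swap i a` turns `swap a x` into `swap i x`
    have hconj : (l.reverse.map (swap i)).prod =
        MulAut.conj (swap i a) (l.reverse.map (swap a)).prod := by
      rw [map_list_prod, List.map_map]
      refine congrArg List.prod (List.map_congr_left fun x hx => ?_)
      rw [List.mem_reverse] at hx
      rw [Function.comp_apply, MulAut.conj_apply, swap_inv, swap_comm i a, swap_comm a x,
        swap_mul_swap_mul_swap (by rintro rfl; exact ha hx)
          (by rintro rfl; exact hi (List.mem_cons_of_mem a hx))]
    rw [List.reverse_cons, List.map_append, List.prod_append, hconj, MulAut.conj_apply, swap_inv,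
      List.map_singleton, List.prod_singleton, mul_assoc, swap_mul_self, mul_one,
      ih (List.nodup_cons.2 ⟨ha, hl⟩)]
    simp [List.zip_cons_cons]

def Finset.increasingCycle {α : Type*} [DecidableEq α] [LinearOrder α] (s : Finset α) :
    Perm α :=
  (((s.sort (· ≤ ·)).zip (s.sort (· ≤ ·)).tail).map fun p => swap p.1 p.2).prod

theorem Finset.increasingCycle_insert {α : Type*} [DecidableEq α] [LinearOrder α] {i : α}
    {T : Finset α} (hT : ∀ x ∈ T, i < x) :
    (insert i T).increasingCycle = ((T.sort (· ≤ ·)).reverse.map (swap i)).prod := by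
  have hiT : i ∉ T := fun h => lt_irrefl i (hT i h)
  rw [increasingCycle, sort_insert _ (fun x hx => (hT x hx).le) hiT, List.tail_cons,
    Perm.prod_map_swap_reverse]
  exact List.nodup_cons.2 ⟨by simpa using hiT, sort_nodup _ _⟩

noncomputable def cycleMonomial (k : Type*) [Semiring k] (n : ℕ) (s : Finset (Fin n)) :
    (MonoidAlgebra k (Perm (Fin n)))[X] :=
  C (MonoidAlgebra.of k _ s.increasingCycle) * X ^ (n - #s)

theorem filter_mem_filter_lt_reverse_finRange {n : ℕ} {i : Fin n} {T : Finset (Fin n)}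
    (hT : T ⊆ Ioi i) :
    ((List.finRange n).reverse.filter (i < ·)).filter (· ∈ T) = (T.sort (· ≤ ·)).reverse := by
  refine List.SortedGT.eq_reverse_of_mem_iff_of_sortedLT (fun x => ?_) ?_ (sortedLT_sort T)
  · simpa using fun hx => mem_Ioi.1 (hT hx)
  · rw [List.sortedGT_iff_pairwise]
    exact ((List.pairwise_reverse.2 (List.sortedLT_finRange n).pairwise).filter _).filter _

theorem prod_X_add_C_swap_mul_X_pow (k : Type*) [Semiring k] {n : ℕ} (i : Fin n) :
    (((List.finRange n).reverse.filter (i < ·)).map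
        fun a => X + C (MonoidAlgebra.of k (Perm (Fin n)) (swap i a))).prod * X ^ (i : ℕ) =
      ∑ T ∈ (Ioi i).powerset, cycleMonomial k n (insert i T) := by
  set l := (List.finRange n).reverse.filter (i < ·)
  have hl : l.Nodup := (List.nodup_reverse.2 (List.nodup_finRange n)).filter _
  have hl_toFinset : l.toFinset = Ioi i := by ext; simp [l]
  have hl_length : l.length = n - 1 - i := by
    rw [← List.toFinset_card_of_nodup hl, hl_toFinset, Fin.card_Ioi]
  rw [List.prod_map_X_add_C_eq_sum_powerset _ hl, hl_toFinset, sum_mul]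
  refine sum_congr rfl fun T hT => ?_
  have hTi := mem_powerset.1 hT
  have hcard : #T ≤ n - 1 - i := Fin.card_Ioi i ▸ card_le_card hTi
  rw [filter_mem_filter_lt_reverse_finRange hTi, cycleMonomial,
    increasingCycle_insert fun x hx => mem_Ioi.1 (hTi hx),
    card_insert_of_notMem fun h => lt_irrefl i (mem_Ioi.1 (hTi h)),
    map_list_prod (MonoidAlgebra.of k (Perm (Fin n))), List.map_map, mul_assoc, ← pow_add,
    hl_length]
  congr 2
  omega

theorem cycleMonomial_singleton (k : Type*) [Semiring k] {n : ℕ} (a : Fin n) :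
    cycleMonomial k n {a} = X ^ (n - 1) := by
  simp [cycleMonomial, increasingCycle, ← MonoidAlgebra.one_def]

theorem Finset.sum_sum_powerset_Ioi_insert {α M : Type*} [Fintype α] [LinearOrder α]
    [LocallyFiniteOrderTop α] [AddCommMonoid M] (f : Finset α → M) :
    ∑ i, ∑ T ∈ (Ioi i).powerset, f (insert i T) = ∑ s with s.Nonempty, f s := by
  rw [sum_sigma']
  refine sum_bij' (fun x _ => insert x.1 x.2)
    (fun s hs => ⟨s.min' (mem_filter.1 hs).2, s.erase (s.min' (mem_filter.1 hs).2)⟩)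
    (fun x _ => by simp) (fun s hs => ?_) (fun x hx => ?_)
    (fun s hs => insert_erase (min'_mem _ (mem_filter.1 hs).2)) (fun _ _ => rfl)
  · simp only [mem_sigma, mem_univ, mem_powerset, true_and]
    exact fun x hx => mem_Ioi.2 <|
      (min'_le s x (mem_of_mem_erase hx)).lt_of_ne (ne_of_mem_erase hx).symm
  · obtain ⟨i, T⟩ := x
    have hTi : T ⊆ Ioi i := mem_powerset.1 (mem_sigma.1 hx).2
    have hmin : (insert i T).min' (insert_nonempty i T) = i :=
      le_antisymm (min'_le _ _ (mem_insert_self i T)) <| le_min' _ _ _ fun y hy =>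
        (mem_insert.1 hy).elim ge_of_eq fun hy => (mem_Ioi.1 (hTi hy)).le
    have hiT : i ∉ T := fun h => lt_irrefl i (mem_Ioi.1 (hTi h))
    simp [hmin, erase_insert hiT]

theorem Finset.sum_nonempty_eq_card_nsmul_add_sum_two_le_card {α M : Type*} [Fintype α]
    [AddCommMonoid M] {f : Finset α → M} {c : M} (hf : ∀ a, f {a} = c) :
    ∑ s with s.Nonempty, f s = Fintype.card α • c + ∑ s, if 2 ≤ #s then f s else 0 := by
  have hsplit (s : Finset α) : (if s.Nonempty then f s else 0) =
      (if #s = 1 then c else 0) + (if 2 ≤ #s then f s else 0) := by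
    obtain h | h | h : #s = 0 ∨ #s = 1 ∨ 2 ≤ #s := by omega
    · simp [card_eq_zero.1 h]
    · obtain ⟨a, rfl⟩ := card_eq_one.1 h
      simp [hf]
    · simp [← card_pos, h, show 0 < #s by omega, show #s ≠ 1 by omega]
  rw [sum_filter, sum_congr rfl fun s _ => hsplit s, sum_add_distrib, ← sum_filter, sum_const,
    ← powerset_univ, ← powersetCard_eq_filter, card_powersetCard, Nat.choose_one_right,
    card_univ]

/-- with `ℏ = 1` and `z_1 = ⋯ = z_n = 0`, in `ℂ[S_n][u]`,
`S_1^{(n)}(u) = Σ_{i=1}^n (u + σ_{i,n})⋯(u + σ_{i,i+1}) u^{i-1}` equals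
`n u^{n-1} + Σ_{k=2}^n G_k^{(n)} u^{n-k}` where
`G_k^{(n)} = Σ_{i_1<⋯<i_k} σ_{i_1,i_2}σ_{i_2,i_3}⋯σ_{i_{k-1},i_k}` is the sum of all
increasing `k`-cycles. Subsets `s` of cardinality `k ≥ 2` encode the tuples. -/
theorem stmt_19 (n : ℕ) :
    ∑ i : Fin n,
        (((List.finRange n).reverse.filter (fun a => i < a)).map
          (fun a => Polynomial.X
            + Polynomial.C (MonoidAlgebra.of ℂ (Equiv.Perm (Fin n)) (Equiv.swap i a)))).prod
        * Polynomial.X ^ (i : ℕ)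
    = (n : ℂ) • Polynomial.X ^ (n - 1)
      + ∑ s : Finset (Fin n),
          if 2 ≤ s.card then
            Polynomial.C (MonoidAlgebra.of ℂ (Equiv.Perm (Fin n))
                ((((s.sort (· ≤ ·)).zip (s.sort (· ≤ ·)).tail).map
                  (fun p => Equiv.swap p.1 p.2)).prod))
              * Polynomial.X ^ (n - s.card)
          else 0 := by
  rw [sum_congr rfl fun i _ => prod_X_add_C_swap_mul_X_pow ℂ i, sum_sum_powerset_Ioi_insert,
    sum_nonempty_eq_card_nsmul_add_sum_two_le_card (cycleMonomial_singleton ℂ), Fintype.card_fin,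
    Nat.cast_smul_eq_nsmul]
  rfl
end
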